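/- arXiv:1707.05734 — 4 statements merged into one kernel-verified Lean document; each statement's English description precedes it below -/
import Mathlib

section
/- Assume the inclusion of dom(G) (graph norm) into H₀ is compact, and let ι : ran(G) → H₁ be the inclusion of the closed subspace ran(G), so that ι* is the orthogonal projection of H₁ onto ran(G). Then: (i) for q ∈ H₁ one has q ∈ dom(D̊) if and only if ι*q ∈ dom(D̊), and in that case D̊q = D̊ι*q; (ii) the operator D̊ι with domain ran(G) ∩ dom(D̊), viewed as an operator from the Hilbert space ran(G) to H₀, is densely defined and closed, and its adjoint is −ι*G (with domain dom(G)); (iii) D̊ι is injective; (iv) the inclusion of dom(D̊ι) (graph norm) into H₁ is compact. -/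
open Filter Topology

noncomputable section

namespace DtNPaper

local notation "⟪" x ", " y "⟫" => (inner ℂ x y : ℂ)

/-- Membership in the abstract boundary data space `BD(T)`: `u ∈ dom T`
(with `p = T u`, i.e. `(u, p)` in the graph of `T`) and `u` is orthogonal to
`dom T̊` with respect to the graph inner product of `dom T`. -/
def memBD {E F : Type*} [NormedAddCommGroup E] [InnerProductSpace ℂ E]
    [NormedAddCommGroup F] [InnerProductSpace ℂ F]
    (T Ti : E →ₗ.[ℂ] F) (u : E) : Prop :=
  ∃ p : F, (u, p) ∈ T.graph ∧ ∀ v w, (v, w) ∈ Ti.graph → ⟪v, u⟫ + ⟪w, p⟫ = 0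

/-- A bounded operator `M` is coercive if `Re (M x, x) ≥ μ ‖x‖²` for some `μ > 0`. -/
def Coercive {E : Type*} [NormedAddCommGroup E] [InnerProductSpace ℂ E]
    (M : E →L[ℂ] E) : Prop :=
  ∃ μ : ℝ, 0 < μ ∧ ∀ x : E, μ * ‖x‖ ^ 2 ≤ (⟪x, M x⟫).re

/-- Sequential formulation of compactness of the inclusion of `dom T`
(graph norm) into `E`. -/
def CompactIncl {E F : Type*} [NormedAddCommGroup E] [InnerProductSpace ℂ E]
    [NormedAddCommGroup F] [InnerProductSpace ℂ F] (T : E →ₗ.[ℂ] F) : Prop :=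
  ∀ (u : ℕ → E) (p : ℕ → F), (∀ n, (u n, p n) ∈ T.graph) →
    (∃ C : ℝ, ∀ n, ‖u n‖ ^ 2 + ‖p n‖ ^ 2 ≤ C) →
    ∃ φ : ℕ → ℕ, StrictMono φ ∧ ∃ x : E, Tendsto (fun j => u (φ j)) atTop (𝓝 x)

/-- The range of a partially defined linear operator, as a set. -/
def ranSet {E F : Type*} [NormedAddCommGroup E] [InnerProductSpace ℂ E]
    [NormedAddCommGroup F] [InnerProductSpace ℂ F] (T : E →ₗ.[ℂ] F) : Set F :=
  {p | ∃ u, (u, p) ∈ T.graph}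

/-- The Dirichlet-to-Neumann graph associated with `-D a G + m`:
the set of pairs `(π_{BD(G)} u, π_{BD(D)} (a G u))` where `u ∈ dom (D a G)` and
`m u - D a G u = 0`.  The orthogonal projections onto the boundary data spaces
are characterised by membership in `BD` together with the difference lying in
the domain of the corresponding minimal operator. -/
def dtnGraph {E F : Type*} [NormedAddCommGroup E] [InnerProductSpace ℂ E]
    [NormedAddCommGroup F] [InnerProductSpace ℂ F]
    (G Gi : E →ₗ.[ℂ] F) (D Di : F →ₗ.[ℂ] E)
    (a : F →L[ℂ] F) (m : E →L[ℂ] E) : Set (E × F) :=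
  {z | ∃ u p, (u, p) ∈ G.graph ∧ (a p, m u) ∈ D.graph ∧
    memBD G Gi z.1 ∧ u - z.1 ∈ Gi.domain ∧
    memBD D Di z.2 ∧ a p - z.2 ∈ Di.domain}

/-- The Dirichlet-to-Neumann graph in `H`: `(φ, ψ)` belongs to it if there is
`u₀ ∈ BD(G)` with `κ u₀ = φ` and `Λ u₀ = G (κ* ψ)`; here `k` is `κ` and
`kstarG` is the map `ψ ↦ G (κ* ψ)`. -/
def dtnGraphH {E F HS : Type*} [NormedAddCommGroup E] [InnerProductSpace ℂ E]
    [NormedAddCommGroup F] [InnerProductSpace ℂ F]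
    [NormedAddCommGroup HS] [InnerProductSpace ℂ HS]
    (G Gi : E →ₗ.[ℂ] F) (D Di : F →ₗ.[ℂ] E)
    (a : F →L[ℂ] F) (m : E →L[ℂ] E)
    (k : E → HS) (kstarG : HS → F) : Set (HS × HS) :=
  {z | ∃ u₀ : E, memBD G Gi u₀ ∧ k u₀ = z.1 ∧
    (u₀, kstarG z.2) ∈ dtnGraph G Gi D Di a m}

variable {H₀ H₁ HS : Type*}
  [NormedAddCommGroup H₀] [InnerProductSpace ℂ H₀] [CompleteSpace H₀]
  [NormedAddCommGroup H₁] [InnerProductSpace ℂ H₁] [CompleteSpace H₁]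

/-! `D̊ = -G*` sees its argument only through inner products with `ran G`, so it is unchanged
when the argument is replaced by its projection onto `ran G`; this is (i). Since the graph of `G`
is closed, `G** = G`: a pair orthogonal to the rotated graph of `D̊` lies in the graph of `G`. This
gives the density of `ran G ∩ dom D̊` in `ran G` and the formula for the adjoint in (ii), and (iii)
is `⟪D̊ G u, u⟫ = -‖G u‖²`. For (iv), compactness of `dom G ↪ H₀` yields a Poincaré inequality
`‖u‖ ≤ c ‖G u‖` on `(ker G)ᗮ`. Writing `q = G v` with `v ∈ (ker G)ᗮ`, a bounded sequence in
`dom (D̊ι)` has bounded preimages `v`, a subsequence of which converges, and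
`‖q_i - q_j‖² ≤ ‖D̊ q_i - D̊ q_j‖ ‖v_i - v_j‖` makes the corresponding `q_i` Cauchy. -/

def IsOrthProj {E : Type*} [NormedAddCommGroup E] [InnerProductSpace ℂ E]
    (S : Set E) (P : E → E) : Prop :=
  ∀ q, P q ∈ S ∧ ∀ r ∈ S, ⟪r, q - P q⟫ = 0

/-- `D̊ = -G*`, expressed through the graphs. -/
def IsNegAdjoint {E F : Type*} [NormedAddCommGroup E] [InnerProductSpace ℂ E]
    [NormedAddCommGroup F] [InnerProductSpace ℂ F]
    (G : E →ₗ.[ℂ] F) (Di : F →ₗ.[ℂ] E) : Prop :=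
  ∀ q w, (q, w) ∈ Di.graph ↔ ∀ u p, (u, p) ∈ G.graph → ⟪w, u⟫ = -⟪q, p⟫

def ranSubmodule {E F : Type*} [AddCommGroup E] [Module ℂ E] [AddCommGroup F] [Module ℂ F]
    (G : E →ₗ.[ℂ] F) : Submodule ℂ F :=
  G.graph.map (LinearMap.snd ℂ E F)

def kerSubmodule {E F : Type*} [AddCommGroup E] [Module ℂ E] [AddCommGroup F] [Module ℂ F]
    (G : E →ₗ.[ℂ] F) : Submodule ℂ E :=
  G.graph.comap (LinearMap.inl ℂ E F)

theorem cauchySeq_of_norm_sub_sq_le {ι E F : Type*} [Nonempty ι] [SemilatticeSup ι]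
    [SeminormedAddCommGroup E] [SeminormedAddCommGroup F] {v : ι → E} {q : ι → F} {B : ℝ}
    (hv : CauchySeq v) (h : ∀ i j, ‖q i - q j‖ ^ 2 ≤ B * ‖v i - v j‖) : CauchySeq q := by
  rw [cauchySeq_iff_tendsto_dist_atTop_0] at hv ⊢
  have hsqrt : Tendsto (fun d => √(B * d)) (𝓝 0) (𝓝 0) := by
    simpa using ((continuous_const.mul continuous_id).sqrt.tendsto (0 : ℝ))
  refine squeeze_zero (fun _ => dist_nonneg) (fun ij => ?_) (hsqrt.comp hv)
  simpa only [Function.comp_apply, dist_eq_norm] using Real.le_sqrt_of_sq_le (h ij.1 ij.2)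

section Projection

variable {E : Type*} [NormedAddCommGroup E] [InnerProductSpace ℂ E] {S : Set E} {P : E → E}

theorem IsOrthProj.inner_apply_right (hP : IsOrthProj S P) {r : E} (hr : r ∈ S) (q : E) :
    ⟪r, P q⟫ = ⟪r, q⟫ := by
  have h := (hP q).2 r hr
  rw [inner_sub_right, sub_eq_zero] at h
  exact h.symm

theorem IsOrthProj.inner_apply_left (hP : IsOrthProj S P) {r : E} (hr : r ∈ S) (q : E) :
    ⟪P q, r⟫ = ⟪q, r⟫ := by
  rw [← inner_conj_symm, hP.inner_apply_right hr, inner_conj_symm]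

theorem IsOrthProj.apply_eq_self_of_mem_closure (hP : IsOrthProj S P) {r : E}
    (hr : r ∈ closure S) : P r = r := by
  have hr' : ⟪r, r - P r⟫ = 0 :=
    closure_minimal (fun s hs => (hP r).2 s hs)
      (isClosed_eq (continuous_id.inner continuous_const) continuous_const) hr
  have h : ⟪r - P r, r - P r⟫ = 0 := by
    rw [inner_sub_left, hr', (hP r).2 _ (hP r).1, sub_zero]
  exact (sub_eq_zero.mp (inner_self_eq_zero.mp h)).symm

theorem IsOrthProj.apply_eq_self (hP : IsOrthProj S P) {r : E} (hr : r ∈ S) : P r = r :=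
  hP.apply_eq_self_of_mem_closure (subset_closure hr)

theorem IsOrthProj.isClosed (hP : IsOrthProj S P) : IsClosed S :=
  isClosed_of_closure_subset fun r hr => hP.apply_eq_self_of_mem_closure hr ▸ (hP r).1

end Projection

section Operators

variable {E F : Type*} [NormedAddCommGroup E] [InnerProductSpace ℂ E]
  [NormedAddCommGroup F] [InnerProductSpace ℂ F] {G : E →ₗ.[ℂ] F} {Di : F →ₗ.[ℂ] E}

theorem coe_ranSubmodule (G : E →ₗ.[ℂ] F) : (ranSubmodule G : Set F) = ranSet G := by
  ext p
  simp [ranSubmodule, ranSet]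

theorem mem_kerSubmodule {x : E} : x ∈ kerSubmodule G ↔ (x, 0) ∈ G.graph := Iff.rfl

theorem isClosed_kerSubmodule (hG : G.IsClosed) : IsClosed (kerSubmodule G : Set E) :=
  hG.preimage (continuous_id.prodMk continuous_const)

theorem IsNegAdjoint.isClosed (hD : IsNegAdjoint G Di) : Di.IsClosed := by
  have h : (Di.graph : Set (F × E)) =
      ⋂ up ∈ (G.graph : Set (E × F)), {z : F × E | ⟪z.2, up.1⟫ = -⟪z.1, up.2⟫} := by
    ext z
    simp only [SetLike.mem_coe, Set.mem_iInter, Set.mem_ofPred_eq, Prod.forall]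
    exact hD z.1 z.2
  rw [LinearPMap.IsClosed, h]
  exact isClosed_biInter fun up _ => isClosed_eq (continuous_snd.inner continuous_const)
    (continuous_fst.inner continuous_const).neg

theorem IsNegAdjoint.norm_sq_le (hD : IsNegAdjoint G Di) {v : E} {q : F} {w : E}
    (hv : (v, q) ∈ G.graph) (hq : (q, w) ∈ Di.graph) : ‖q‖ ^ 2 ≤ ‖w‖ * ‖v‖ :=
  calc ‖q‖ ^ 2 = ‖⟪w, v⟫‖ := by
        rw [(hD q w).1 hq v q hv, norm_neg, inner_self_eq_norm_sq_to_K]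
        simp
    _ ≤ ‖w‖ * ‖v‖ := norm_inner_le_norm w v

theorem IsNegAdjoint.eq_zero_of_mem_ranSet (hD : IsNegAdjoint G Di) {q : F}
    (hq : q ∈ ranSet G) (hq0 : (q, 0) ∈ Di.graph) : q = 0 := by
  obtain ⟨v, hv⟩ := hq
  simpa using hD.norm_sq_le hv hq0

theorem IsNegAdjoint.mem_graph_iff_apply (hD : IsNegAdjoint G Di) {P : F → F}
    (hP : IsOrthProj (ranSet G) P) (q : F) (w : E) :
    (q, w) ∈ Di.graph ↔ (P q, w) ∈ Di.graph := by
  rw [hD, hD]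
  refine forall₂_congr fun u p => imp_congr_right fun hup => ?_
  rw [hP.inner_apply_left ⟨u, hup⟩]

theorem eq_zero_of_tendsto_of_mem_orthogonal (hG : G.IsClosed) {u : ℕ → E} {p : ℕ → F} {x : E}
    (hup : ∀ n, (u n, p n) ∈ G.graph) (hu : ∀ n, u n ∈ (kerSubmodule G)ᗮ)
    (hux : Tendsto u atTop (𝓝 x)) (hp : Tendsto p atTop (𝓝 0)) : x = 0 := by
  have hxK : x ∈ kerSubmodule G :=
    hG.mem_of_tendsto (hux.prodMk_nhds hp) (Eventually.of_forall hup)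
  have hxKperp : x ∈ (kerSubmodule G)ᗮ :=
    (Submodule.isClosed_orthogonal _).mem_of_tendsto hux (Eventually.of_forall hu)
  exact inner_self_eq_zero.mp ((Submodule.mem_orthogonal _ _).1 hxKperp x hxK)

theorem CompactIncl.exists_norm_le_mul (hcpt : CompactIncl G) (hG : G.IsClosed) :
    ∃ c, 0 ≤ c ∧ ∀ u p, (u, p) ∈ G.graph → u ∈ (kerSubmodule G)ᗮ → ‖u‖ ≤ c * ‖p‖ := by
  by_contra! hcon
  have hunit : ∀ n : ℕ, ∃ u p, (u, p) ∈ G.graph ∧ u ∈ (kerSubmodule G)ᗮ ∧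
      ‖u‖ = 1 ∧ ‖p‖ < 1 / (n + 1) := by
    intro n
    obtain ⟨u, p, hup, hu, hlt⟩ := hcon (n + 1) (by positivity)
    have hu0 : 0 < ‖u‖ := (mul_nonneg (by positivity) (norm_nonneg p)).trans_lt hlt
    refine ⟨((‖u‖⁻¹ : ℝ) : ℂ) • u, ((‖u‖⁻¹ : ℝ) : ℂ) • p, G.graph.smul_mem _ hup,
      Submodule.smul_mem _ _ hu, ?_, ?_⟩
    · simp [norm_smul, hu0.ne']
    · rw [norm_smul, Complex.norm_real, Real.norm_of_nonneg (by positivity),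
        lt_div_iff₀ (by positivity)]
      calc ‖u‖⁻¹ * ‖p‖ * (n + 1) = ‖u‖⁻¹ * ((n + 1) * ‖p‖) := by ring
        _ < ‖u‖⁻¹ * ‖u‖ := by gcongr
        _ = 1 := inv_mul_cancel₀ hu0.ne'
  choose u p hup hu hu1 hp using hunit
  obtain ⟨φ, hφ, x, hx⟩ := hcpt u p hup ⟨2, fun n => by
    have hp1 : ‖p n‖ ≤ 1 := (hp n).le.trans (div_le_one_of_le₀ (by simp) (by positivity))
    nlinarith [hu1 n, norm_nonneg (p n)]⟩
  have hp0 : Tendsto p atTop (𝓝 0) :=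
    squeeze_zero_norm (fun n => (hp n).le) tendsto_one_div_add_atTop_nhds_zero_nat
  have hx0 := eq_zero_of_tendsto_of_mem_orthogonal hG (fun j => hup (φ j)) (fun j => hu (φ j))
    hx (hp0.comp hφ.tendsto_atTop)
  -- `x = 0`, yet `‖x‖ = lim ‖u (φ j)‖ = 1`
  have hnorm := hx.norm
  simp [hu1, hx0] at hnorm

theorem exists_mem_orthogonal_kerSubmodule [CompleteSpace E] (hG : G.IsClosed) {p : F}
    (hp : p ∈ ranSet G) : ∃ v ∈ (kerSubmodule G)ᗮ, (v, p) ∈ G.graph := by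
  obtain ⟨a, ha⟩ := hp
  have : CompleteSpace (kerSubmodule G) := (isClosed_kerSubmodule hG).completeSpace_coe
  refine ⟨a - (kerSubmodule G).starProjection a, Submodule.sub_starProjection_mem_orthogonal a, ?_⟩
  simpa using G.graph.sub_mem ha (mem_kerSubmodule.1 ((kerSubmodule G).starProjection_apply_mem a))

end Operators

section Complete

variable {E F : Type*} [NormedAddCommGroup E] [InnerProductSpace ℂ E] [CompleteSpace E]
  [NormedAddCommGroup F] [InnerProductSpace ℂ F] [CompleteSpace F]
  {G : E →ₗ.[ℂ] F} {Di : F →ₗ.[ℂ] E}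

/-- A closed subspace of `E × F` is its own double orthogonal complement for the `L²` inner
product `⟪(a, b), (x, y)⟫ = ⟪a, x⟫ + ⟪b, y⟫`. -/
theorem mem_of_isClosed_of_forall_inner {g : Submodule ℂ (E × F)} (hg : IsClosed (g : Set (E × F)))
    {x : E × F}
    (h : ∀ y : E × F, (∀ z ∈ g, ⟪y.1, z.1⟫ + ⟪y.2, z.2⟫ = 0) → ⟪y.1, x.1⟫ + ⟪y.2, x.2⟫ = 0) :
    x ∈ g := by
  let M : Submodule ℂ (WithLp 2 (E × F)) :=
    g.comap (WithLp.linearEquiv 2 ℂ (E × F)).toLinearMap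
  have hM : IsClosed (M : Set (WithLp 2 (E × F))) :=
    hg.preimage (WithLp.prod_continuous_ofLp 2 E F)
  suffices WithLp.toLp 2 x ∈ Mᗮᗮ by
    rwa [Submodule.orthogonal_orthogonal_eq_closure, hM.submodule_topologicalClosure_eq] at this
  rw [Submodule.mem_orthogonal]
  intro y hy
  rw [WithLp.prod_inner_apply]
  refine h y.ofLp fun z hz => ?_
  simpa [WithLp.prod_inner_apply] using
    (Submodule.mem_orthogonal' M y).1 hy (WithLp.toLp 2 z) hz

theorem IsNegAdjoint.mem_graph_of_forall (hG : G.IsClosed) (hD : IsNegAdjoint G Di) {u : E}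
    {z : F} (h : ∀ q w, (q, w) ∈ Di.graph → ⟪w, u⟫ + ⟪q, z⟫ = 0) : (u, z) ∈ G.graph :=
  mem_of_isClosed_of_forall_inner hG fun y hy =>
    h y.2 y.1 <| (hD _ _).2 fun a b hab => eq_neg_of_add_eq_zero_left (hy (a, b) hab)

theorem IsNegAdjoint.eq_zero_of_forall_inner (hG : G.IsClosed) (hD : IsNegAdjoint G Di) {z : F}
    (h : ∀ q w, (q, w) ∈ Di.graph → ⟪q, z⟫ = 0) : z = 0 :=
  G.graph_fst_eq_zero_snd (hD.mem_graph_of_forall hG fun q w hqw => by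
    rw [inner_zero_right, h q w hqw, add_zero]) rfl

theorem IsNegAdjoint.ranSet_subset_closure (hG : G.IsClosed) (hD : IsNegAdjoint G Di)
    {P : F → F} (hP : IsOrthProj (ranSet G) P) :
    ranSet G ⊆ closure {q : F | q ∈ ranSet G ∧ q ∈ Di.domain} := by
  let S := ranSubmodule G ⊓ Di.domain
  have hS : (S : Set F) = {q : F | q ∈ ranSet G ∧ q ∈ Di.domain} := by
    ext q
    simp [S, ← coe_ranSubmodule G]
  intro r hr
  suffices r ∈ Sᗮᗮ by
    rwa [Submodule.orthogonal_orthogonal_eq_closure, ← SetLike.mem_coe,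
      Submodule.topologicalClosure_coe, hS] at this
  rw [Submodule.mem_orthogonal]
  intro y hy
  -- `P y` is orthogonal to `dom D̊`, hence vanishes by `G** = G`.
  have hPy : P y = 0 := hD.eq_zero_of_forall_inner hG fun q w hqw => by
    have hPq : P q ∈ S := by
      rw [← SetLike.mem_coe, hS]
      exact ⟨(hP q).1, LinearPMap.mem_domain_of_mem_graph ((hD.mem_graph_iff_apply hP q w).1 hqw)⟩
    rw [← hP.inner_apply_left (hP y).1, hP.inner_apply_right (hP q).1]
    exact (Submodule.mem_orthogonal S y).1 hy _ hPq
  rw [← hP.inner_apply_left hr, hPy, inner_zero_left]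

theorem IsNegAdjoint.adjoint_comp_inclusion (hG : G.IsClosed) (hD : IsNegAdjoint G Di)
    {P : F → F} (hP : IsOrthProj (ranSet G) P) (u : E) (z : F) :
    (∃ p, (u, p) ∈ G.graph ∧ z = -(P p)) ↔
      (z ∈ ranSet G ∧ ∀ q w, q ∈ ranSet G → (q, w) ∈ Di.graph → ⟪z, q⟫ = ⟪u, w⟫) := by
  have hneg : ∀ {r : F}, r ∈ ranSet G → -r ∈ ranSet G := fun hr => by
    rw [← coe_ranSubmodule] at hr ⊢
    exact neg_mem hr
  constructor
  · rintro ⟨p, hup, rfl⟩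
    refine ⟨hneg (hP p).1, fun q w hq hqw => ?_⟩
    rw [inner_neg_left, hP.inner_apply_left hq, ← inner_conj_symm u,
      (hD q w).1 hqw u p hup, map_neg, inner_conj_symm]
  · rintro ⟨hz, hadj⟩
    refine ⟨-z, ?_, by rw [hP.apply_eq_self (hneg hz), neg_neg]⟩
    refine hD.mem_graph_of_forall hG fun q w hqw => ?_
    have hzq : ⟪z, q⟫ = ⟪u, w⟫ := by
      rw [← hP.inner_apply_right hz]
      exact hadj (P q) w (hP q).1 ((hD.mem_graph_iff_apply hP q w).1 hqw)
    rw [inner_neg_right, ← inner_conj_symm q, hzq, inner_conj_symm, add_neg_cancel]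

theorem IsNegAdjoint.exists_subseq_tendsto (hG : G.IsClosed) (hD : IsNegAdjoint G Di)
    (hcpt : CompactIncl G) {q : ℕ → F} {w : ℕ → E}
    (hqw : ∀ n, q n ∈ ranSet G ∧ (q n, w n) ∈ Di.graph)
    (hbdd : ∃ C : ℝ, ∀ n, ‖q n‖ ^ 2 + ‖w n‖ ^ 2 ≤ C) :
    ∃ σ : ℕ → ℕ, StrictMono σ ∧ ∃ r : F, Tendsto (fun j => q (σ j)) atTop (𝓝 r) := by
  obtain ⟨C, hC⟩ := hbdd
  have hq : ∀ n, ‖q n‖ ≤ √C := fun n =>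
    Real.le_sqrt_of_sq_le (by nlinarith [hC n, sq_nonneg ‖w n‖])
  have hw : ∀ n, ‖w n‖ ≤ √C := fun n =>
    Real.le_sqrt_of_sq_le (by nlinarith [hC n, sq_nonneg ‖q n‖])
  obtain ⟨c, hc0, hc⟩ := hcpt.exists_norm_le_mul hG
  choose v hvK hv using fun n => exists_mem_orthogonal_kerSubmodule hG (hqw n).1
  have hvC : ∀ n, ‖v n‖ ≤ c * √C := fun n =>
    (hc _ _ (hv n) (hvK n)).trans (mul_le_mul_of_nonneg_left (hq n) hc0)
  obtain ⟨φ, hφ, x, hx⟩ := hcpt v q hv ⟨(c * √C) ^ 2 + C, fun n => by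
    nlinarith [hC n, sq_nonneg ‖w n‖, norm_nonneg (v n), hvC n]⟩
  refine ⟨φ, hφ, cauchySeq_tendsto_of_complete <|
    cauchySeq_of_norm_sub_sq_le (B := 2 * √C) hx.cauchySeq fun i j => ?_⟩
  calc ‖q (φ i) - q (φ j)‖ ^ 2
      ≤ ‖w (φ i) - w (φ j)‖ * ‖v (φ i) - v (φ j)‖ :=
        hD.norm_sq_le (G.graph.sub_mem (hv _) (hv _)) (Di.graph.sub_mem (hqw _).2 (hqw _).2)
    _ ≤ 2 * √C * ‖v (φ i) - v (φ j)‖ := by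
        gcongr
        linarith [norm_sub_le (w (φ i)) (w (φ j)), hw (φ i), hw (φ j)]

end Complete

theorem statement12_general
    (G : H₀ →ₗ.[ℂ] H₁) (Di : H₁ →ₗ.[ℂ] H₀)
    (hGclosed : IsClosed (G.graph : Set (H₀ × H₁)))
    (hDi : ∀ q w, (q, w) ∈ Di.graph ↔ ∀ u p, (u, p) ∈ G.graph → ⟪w, u⟫ = -⟪q, p⟫)
    (hcpt : CompactIncl G)
    (P : H₁ → H₁)
    (hP : ∀ q : H₁, P q ∈ ranSet G ∧ ∀ r ∈ ranSet G, ⟪r, q - P q⟫ = 0) :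
    -- (i) q ∈ dom D̊ iff ι* q ∈ dom D̊, and then D̊ q = D̊ ι* q
    (∀ q w, (q, w) ∈ Di.graph ↔ (P q, w) ∈ Di.graph) ∧
    -- (ii) D̊ι is densely defined in ran G ...
    (ranSet G ⊆ closure {q : H₁ | q ∈ ranSet G ∧ q ∈ Di.domain}) ∧
    -- ... and closed ...
    IsClosed {z : H₁ × H₀ | z.1 ∈ ranSet G ∧ z ∈ Di.graph} ∧
    -- ... with adjoint (D̊ι)* = -ι* G (with domain dom G)
    (∀ (u : H₀) (z : H₁),
      (∃ p, (u, p) ∈ G.graph ∧ z = -(P p)) ↔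
      (z ∈ ranSet G ∧ ∀ q w, q ∈ ranSet G → (q, w) ∈ Di.graph →
        ⟪z, q⟫ = ⟪u, w⟫)) ∧
    -- (iii) D̊ι is injective
    (∀ q w, q ∈ ranSet G → (q, w) ∈ Di.graph → w = 0 → q = 0) ∧
    -- (iv) the inclusion of dom(D̊ι) (graph norm) into H₁ is compact
    (∀ (q : ℕ → H₁) (w : ℕ → H₀),
      (∀ n, q n ∈ ranSet G ∧ (q n, w n) ∈ Di.graph) →
      (∃ C : ℝ, ∀ n, ‖q n‖ ^ 2 + ‖w n‖ ^ 2 ≤ C) →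
      ∃ σ : ℕ → ℕ, StrictMono σ ∧
        ∃ r : H₁, Tendsto (fun j => q (σ j)) atTop (𝓝 r)) := by
  have hD : IsNegAdjoint G Di := hDi
  have hP' : IsOrthProj (ranSet G) P := hP
  refine ⟨hD.mem_graph_iff_apply hP', hD.ranSet_subset_closure hGclosed hP',
    (hP'.isClosed.preimage continuous_fst).inter hD.isClosed,
    hD.adjoint_comp_inclusion hGclosed hP', ?_, fun q w => hD.exists_subseq_tendsto hGclosed hcpt⟩
  rintro q w hq hqw rfl
  exact hD.eq_zero_of_mem_ranSet hq hqw

/-- Lemma 4.4 (i)-(iv): properties of the operator `D̊ι` with domain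
`ran G ∩ dom D̊`, viewed as an operator from `ran G` into `H₀`; here `P = ι*`
is the orthogonal projection of `H₁` onto the closed subspace `ran G`. -/
theorem statement12
    (G Gi : H₀ →ₗ.[ℂ] H₁) (D Di : H₁ →ₗ.[ℂ] H₀)
    (hGdense : Dense (G.domain : Set H₀)) (hDdense : Dense (D.domain : Set H₁))
    (hGclosed : IsClosed (G.graph : Set (H₀ × H₁)))
    (hDclosed : IsClosed (D.graph : Set (H₁ × H₀)))
    (hGi : ∀ u w, (u, w) ∈ Gi.graph ↔ ∀ q s, (q, s) ∈ D.graph → ⟪w, q⟫ = -⟪u, s⟫)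
    (hDi : ∀ q w, (q, w) ∈ Di.graph ↔ ∀ u p, (u, p) ∈ G.graph → ⟪w, u⟫ = -⟪q, p⟫)
    (hGiG : Gi.graph ≤ G.graph) (hDiD : Di.graph ≤ D.graph)
    (hcpt : CompactIncl G)
    (P : H₁ → H₁)
    (hP : ∀ q : H₁, P q ∈ ranSet G ∧ ∀ r ∈ ranSet G, ⟪r, q - P q⟫ = 0) :
    -- (i) q ∈ dom D̊ iff ι* q ∈ dom D̊, and then D̊ q = D̊ ι* q
    (∀ q w, (q, w) ∈ Di.graph ↔ (P q, w) ∈ Di.graph) ∧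
    -- (ii) D̊ι is densely defined in ran G ...
    (ranSet G ⊆ closure {q : H₁ | q ∈ ranSet G ∧ q ∈ Di.domain}) ∧
    -- ... and closed ...
    IsClosed {z : H₁ × H₀ | z.1 ∈ ranSet G ∧ z ∈ Di.graph} ∧
    -- ... with adjoint (D̊ι)* = -ι* G (with domain dom G)
    (∀ (u : H₀) (z : H₁),
      (∃ p, (u, p) ∈ G.graph ∧ z = -(P p)) ↔
      (z ∈ ranSet G ∧ ∀ q w, q ∈ ranSet G → (q, w) ∈ Di.graph →
        ⟪z, q⟫ = ⟪u, w⟫)) ∧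
    -- (iii) D̊ι is injective
    (∀ q w, q ∈ ranSet G → (q, w) ∈ Di.graph → w = 0 → q = 0) ∧
    -- (iv) the inclusion of dom(D̊ι) (graph norm) into H₁ is compact
    (∀ (q : ℕ → H₁) (w : ℕ → H₀),
      (∀ n, q n ∈ ranSet G ∧ (q n, w n) ∈ Di.graph) →
      (∃ C : ℝ, ∀ n, ‖q n‖ ^ 2 + ‖w n‖ ^ 2 ≤ C) →
      ∃ σ : ℕ → ℕ, StrictMono σ ∧
        ∃ r : H₁, Tendsto (fun j => q (σ j)) atTop (𝓝 r)) :=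
  statement12_general G Di hGclosed hDi hcpt P hP

end DtNPaper
end
end

section
/- Let H̃ be a complex Hilbert space, M ∈ L(H̃), A a skew-adjoint operator in H̃ (A* = −A), and (Mₙ)ₙ a sequence in L(H̃) converging to M in the weak operator topology. Assume the inclusion of dom(A) (graph norm) into H̃ is compact and there is λ > 0 with Re(Mₙx, x) ≥ λ‖x‖² for all n and all x ∈ H̃. Let (xₙ)ₙ be a sequence in H̃ converging weakly to x ∈ H̃. Then M + A (domain dom(A)) is bijective onto H̃ and (Mₙ + A)^{-1} xₙ converges weakly in dom(A) (graph norm) to (M + A)^{-1} x. -/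
/-!
Coercivity of `M` and `Re ⟪z, A z⟫ = 0` give the a priori bound `λ ‖z‖ ≤ ‖M z + A z‖`, so `M + A`
is injective with closed range on the (closed) graph of `A`; a vector orthogonal to the range lies
in `dom A* = dom A`, and the same computation shows that it vanishes. For the convergence, the
solutions `(zₙ, A zₙ)` are bounded in the graph norm uniformly in `n`, so by compactness every
subsequence of `zₙ` has a further subsequence converging in norm; along it `A zₙ = xₙ - Mₙ zₙ`
converges weakly, the weakly sequentially closed graph of `A` contains the limit pair, and
uniqueness of the solution for `M` identifies it. Hence `zₙ → (M + A)⁻¹ x` in norm, and then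
`A zₙ = xₙ - Mₙ zₙ ⇀ A (M + A)⁻¹ x`.
-/

open Filter Topology

noncomputable section

namespace DtNPaper

local notation "⟪" x ", " y "⟫" => (inner ℂ x y : ℂ)

variable {H₀ H₁ HS : Type*}
  [NormedAddCommGroup H₀] [InnerProductSpace ℂ H₀] [CompleteSpace H₀]
  [NormedAddCommGroup H₁] [InnerProductSpace ℂ H₁] [CompleteSpace H₁]

section WeakConvergence

variable {H : Type*} [NormedAddCommGroup H] [InnerProductSpace ℂ H]

def WeakTendsto (x : ℕ → H) (xs : H) : Prop :=
  ∀ y : H, Tendsto (fun n => ⟪y, x n⟫) atTop (𝓝 ⟪y, xs⟫)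

namespace WeakTendsto

variable {x : ℕ → H} {xs : H}

theorem of_tendsto (h : Tendsto x atTop (𝓝 xs)) : WeakTendsto x xs :=
  fun _ => tendsto_const_nhds.inner h

theorem comp (h : WeakTendsto x xs) {k : ℕ → ℕ} (hk : Tendsto k atTop atTop) :
    WeakTendsto (x ∘ k) xs :=
  fun y => (h y).comp hk

theorem exists_norm_le [CompleteSpace H] (h : WeakTendsto x xs) : ∃ C, ∀ n, ‖x n‖ ≤ C := by
  obtain ⟨C, hC⟩ := banach_steinhaus (g := fun n => innerSL ℂ (x n)) fun y => by
    obtain ⟨C, hC⟩ := (h y).norm.bddAbove_range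
    exact ⟨C, fun n => by
      simpa [innerSL_apply_apply, norm_inner_symm] using hC (Set.mem_range_self n)⟩
  exact ⟨C, fun n => by simpa [innerSL_apply_norm] using hC n⟩

end WeakTendsto

variable {T : ℕ → H →L[ℂ] H} {M : H →L[ℂ] H}

theorem exists_opNorm_le_of_weakTendsto [CompleteSpace H]
    (hT : ∀ x, WeakTendsto (fun n => T n x) (M x)) : ∃ C, ∀ n, ‖T n‖ ≤ C :=
  banach_steinhaus fun x => (hT x).exists_norm_le

theorem mul_sq_le_re_inner_of_weakTendsto {lam : ℝ}
    (hT : ∀ n x, lam * ‖x‖ ^ 2 ≤ (⟪x, T n x⟫).re)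
    (hTM : ∀ x, WeakTendsto (fun n => T n x) (M x)) (x : H) :
    lam * ‖x‖ ^ 2 ≤ (⟪x, M x⟫).re :=
  ge_of_tendsto' ((Complex.continuous_re.tendsto _).comp (hTM x x)) fun n => hT n x

theorem weakTendsto_apply_of_tendsto {C : ℝ} (hC : ∀ n, ‖T n‖ ≤ C)
    (hT : ∀ x, WeakTendsto (fun n => T n x) (M x)) {u : ℕ → H} {us : H}
    (hu : Tendsto u atTop (𝓝 us)) : WeakTendsto (fun n => T n (u n)) (M us) := by
  intro w
  have hdiff : Tendsto (fun n => ⟪w, T n (u n - us)⟫) atTop (𝓝 0) := by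
    have hlim : Tendsto (fun n => ‖w‖ * C * ‖u n - us‖) atTop (𝓝 0) := by
      simpa using ((tendsto_sub_nhds_zero_iff.mpr hu).norm).const_mul (‖w‖ * C)
    refine squeeze_zero_norm (fun n => ?_) hlim
    calc ‖⟪w, T n (u n - us)⟫‖ ≤ ‖w‖ * ‖T n (u n - us)‖ := norm_inner_le_norm _ _
      _ ≤ ‖w‖ * (C * ‖u n - us‖) := by
        gcongr
        exact (T n).le_of_opNorm_le (hC n) _
      _ = ‖w‖ * C * ‖u n - us‖ := by ring
  simpa [← inner_add_right] using hdiff.add (hT us w)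

theorem weakTendsto_of_apply_add_eq {C : ℝ} (hC : ∀ n, ‖T n‖ ≤ C)
    (hT : ∀ x, WeakTendsto (fun n => T n x) (M x)) {u v x : ℕ → H} {us vs xs : H}
    (hu : Tendsto u atTop (𝓝 us)) (hx : WeakTendsto x xs)
    (hv : ∀ n, T n (u n) + v n = x n) (hvs : M us + vs = xs) : WeakTendsto v vs := by
  intro w
  simpa only [← inner_sub_right, ← hv, ← hvs, add_sub_cancel_left] using
    (hx w).sub (weakTendsto_apply_of_tendsto hC hT hu w)

end WeakConvergence

theorem CompactIncl.exists_strictMono_tendsto {E F : Type*} [NormedAddCommGroup E]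
    [InnerProductSpace ℂ E] [NormedAddCommGroup F] [InnerProductSpace ℂ F] {T : E →ₗ.[ℂ] F}
    (hT : CompactIncl T) {u : ℕ → E} {p : ℕ → F} {C : ℝ} (h : ∀ n, (u n, p n) ∈ T.graph)
    (hC : ∀ n, ‖(u n, p n)‖ ≤ C) : ∃ φ : ℕ → ℕ, StrictMono φ ∧ ∃ x, Tendsto (u ∘ φ) atTop (𝓝 x) :=
  hT u p h ⟨2 * C ^ 2, fun n => by
    have hu : ‖u n‖ ≤ C := (norm_fst_le _).trans (hC n)
    have hp : ‖p n‖ ≤ C := (norm_snd_le _).trans (hC n)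
    nlinarith [norm_nonneg (u n), norm_nonneg (p n)]⟩

section SkewAdjoint

variable {H : Type*} [NormedAddCommGroup H] [InnerProductSpace ℂ H]

-- The right-hand side says that `(x, y)` lies in the graph of the adjoint, so this is `A* = -A`.
def IsSkewAdjoint (A : H →ₗ.[ℂ] H) : Prop :=
  ∀ x y, ((x, -y) ∈ A.graph ↔ ∀ u v, (u, v) ∈ A.graph → ⟪y, u⟫ = ⟪x, v⟫)

def addOnGraph (M : H →L[ℂ] H) (A : H →ₗ.[ℂ] H) : A.graph →L[ℂ] H :=
  (M.comp (ContinuousLinearMap.fst ℂ H H) + ContinuousLinearMap.snd ℂ H H).comp A.graph.subtypeL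

namespace IsSkewAdjoint

variable {A : H →ₗ.[ℂ] H}

theorem inner_eq_neg (hA : IsSkewAdjoint A) {z v u q : H} (h : (z, v) ∈ A.graph)
    (h' : (u, q) ∈ A.graph) : ⟪v, u⟫ = -⟪z, q⟫ := by
  have := (hA z (-v)).mp (by simpa using h) u q h'
  rw [inner_neg_left] at this
  exact neg_eq_iff_eq_neg.mp this

theorem mem_graph (hA : IsSkewAdjoint A) {z v : H}
    (h : ∀ u q, (u, q) ∈ A.graph → ⟪v, u⟫ = -⟪z, q⟫) : (z, v) ∈ A.graph := by
  simpa using (hA z (-v)).mpr fun u q huq => by rw [inner_neg_left, h u q huq, neg_neg]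

theorem re_inner_eq_zero (hA : IsSkewAdjoint A) {z v : H} (h : (z, v) ∈ A.graph) :
    (⟪z, v⟫).re = 0 := by
  have h := congrArg Complex.re (hA.inner_eq_neg h h)
  rw [← inner_conj_symm, Complex.conj_re, Complex.neg_re] at h
  linarith

theorem mem_graph_of_weakTendsto (hA : IsSkewAdjoint A) {z v : ℕ → H} {zs vs : H}
    (h : ∀ n, (z n, v n) ∈ A.graph) (hz : WeakTendsto z zs) (hv : WeakTendsto v vs) :
    (zs, vs) ∈ A.graph := by
  refine hA.mem_graph fun u q huq => ?_
  have hlim : ⟪u, vs⟫ = -⟪q, zs⟫ := tendsto_nhds_unique (hv u) <| (hz q).neg.congr fun n => by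
    rw [← inner_conj_symm u, hA.inner_eq_neg (h n) huq, map_neg, inner_conj_symm]
  rw [← inner_conj_symm, hlim, map_neg, inner_conj_symm]

theorem isClosed_graph (hA : IsSkewAdjoint A) : IsClosed (A.graph : Set (H × H)) :=
  IsSeqClosed.isClosed fun _ _ hp hlim =>
    hA.mem_graph_of_weakTendsto hp (.of_tendsto hlim.fst_nhds) (.of_tendsto hlim.snd_nhds)

variable {M : H →L[ℂ] H} {lam : ℝ}

theorem mul_norm_fst_le (hA : IsSkewAdjoint A) (hM : ∀ x, lam * ‖x‖ ^ 2 ≤ (⟪x, M x⟫).re)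
    {p : H × H} (hp : p ∈ A.graph) : lam * ‖p.1‖ ≤ ‖M p.1 + p.2‖ := by
  have h : lam * ‖p.1‖ ^ 2 ≤ ‖p.1‖ * ‖M p.1 + p.2‖ := calc
    lam * ‖p.1‖ ^ 2 ≤ (⟪p.1, M p.1⟫).re := hM _
    _ = (⟪p.1, M p.1 + p.2⟫).re := by
      rw [inner_add_right, Complex.add_re, hA.re_inner_eq_zero (z := p.1) (v := p.2) hp, add_zero]
    _ ≤ ‖p.1‖ * ‖M p.1 + p.2‖ := (Complex.re_le_norm _).trans (norm_inner_le_norm _ _)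
  rcases (norm_nonneg p.1).eq_or_lt with h0 | h0
  · rw [← h0, mul_zero]
    exact norm_nonneg _
  · nlinarith

theorem norm_le_of_coercive (hA : IsSkewAdjoint A) (hlam : 0 < lam)
    (hM : ∀ x, lam * ‖x‖ ^ 2 ≤ (⟪x, M x⟫).re) {p : H × H} (hp : p ∈ A.graph) :
    ‖p‖ ≤ (1 + lam + ‖M‖) / lam * ‖M p.1 + p.2‖ := by
  have hfst := hA.mul_norm_fst_le hM hp
  have hsnd : lam * ‖p.2‖ ≤ (lam + ‖M‖) * ‖M p.1 + p.2‖ := calc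
    lam * ‖p.2‖ = lam * ‖(M p.1 + p.2) - M p.1‖ := by rw [add_sub_cancel_left]
    _ ≤ lam * (‖M p.1 + p.2‖ + ‖M‖ * ‖p.1‖) := by
      gcongr
      exact norm_sub_le_of_le le_rfl (M.le_opNorm _)
    _ = lam * ‖M p.1 + p.2‖ + ‖M‖ * (lam * ‖p.1‖) := by ring
    _ ≤ lam * ‖M p.1 + p.2‖ + ‖M‖ * ‖M p.1 + p.2‖ := by gcongr
    _ = (lam + ‖M‖) * ‖M p.1 + p.2‖ := by ring
  rw [Prod.norm_def, div_mul_eq_mul_div, le_div_iff₀ hlam, max_mul_of_nonneg _ _ hlam.le]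
  have hf := norm_nonneg (M p.1 + p.2)
  refine max_le ?_ ?_ <;> nlinarith [mul_nonneg (norm_nonneg M) hf, mul_nonneg hlam.le hf]

theorem antilipschitz_addOnGraph (hA : IsSkewAdjoint A) (hlam : 0 < lam)
    (hM : ∀ x, lam * ‖x‖ ^ 2 ≤ (⟪x, M x⟫).re) :
    AntilipschitzWith ((1 + lam + ‖M‖) / lam).toNNReal (addOnGraph M A) :=
  (addOnGraph M A).antilipschitz_of_bound fun p => by
    rw [Real.coe_toNNReal _ (by positivity)]
    exact hA.norm_le_of_coercive hlam hM p.2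

variable [CompleteSpace H]

theorem orthogonal_range_addOnGraph (hA : IsSkewAdjoint A) (hM : Coercive M) :
    (LinearMap.range (addOnGraph M A).toLinearMap)ᗮ = ⊥ := by
  obtain ⟨lam, hlam, hM⟩ := hM
  refine (Submodule.eq_bot_iff _).2 fun g hg => ?_
  have hgraph : (g, M.adjoint g) ∈ A.graph := hA.mem_graph fun u q huq => by
    have h0 : ⟪g, M u + q⟫ = 0 :=
      inner_eq_zero_symm.1 (Submodule.mem_orthogonal _ _ |>.1 hg _ ⟨⟨(u, q), huq⟩, rfl⟩)
    rw [ContinuousLinearMap.adjoint_inner_left]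
    rw [inner_add_right] at h0
    linear_combination h0
  have hre : (⟪g, M g⟫).re = 0 := by
    rw [← hA.re_inner_eq_zero hgraph, ContinuousLinearMap.adjoint_inner_right, ← inner_conj_symm,
      Complex.conj_re]
  have : lam * ‖g‖ ^ 2 ≤ 0 := hre ▸ hM g
  simpa [hlam.ne'] using le_antisymm (nonpos_of_mul_nonpos_right this hlam) (sq_nonneg _)

theorem surjective_addOnGraph (hA : IsSkewAdjoint A) (hM : Coercive M) :
    Function.Surjective (addOnGraph M A) := by
  obtain ⟨lam, hlam, hM'⟩ := id hM
  have : CompleteSpace A.graph := hA.isClosed_graph.completeSpace_coe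
  have hclosed : IsClosed (LinearMap.range (addOnGraph M A).toLinearMap : Set H) := by
    rw [LinearMap.coe_range]
    exact (hA.antilipschitz_addOnGraph hlam hM').isClosed_range (addOnGraph M A).uniformContinuous
  have : CompleteSpace (LinearMap.range (addOnGraph M A).toLinearMap) := hclosed.completeSpace_coe
  exact LinearMap.range_eq_top.1 <|
    Submodule.orthogonal_eq_bot_iff.1 (hA.orthogonal_range_addOnGraph hM)

theorem existsUnique_add_eq (hA : IsSkewAdjoint A) (hM : Coercive M) (f : H) :
    ∃! p : H × H, p ∈ A.graph ∧ M p.1 + p.2 = f := by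
  obtain ⟨p, rfl⟩ := hA.surjective_addOnGraph hM f
  obtain ⟨lam, hlam, hM⟩ := hM
  refine ⟨p, ⟨p.2, rfl⟩, fun q hq => ?_⟩
  exact Subtype.ext_iff.1 <|
    (hA.antilipschitz_addOnGraph hlam hM).injective (a₁ := ⟨q, hq.1⟩) hq.2

variable {T : ℕ → H →L[ℂ] H}

theorem tendsto_of_compactIncl (hA : IsSkewAdjoint A) (hAcpt : CompactIncl A) (hlam : 0 < lam)
    (hT : ∀ n x, lam * ‖x‖ ^ 2 ≤ (⟪x, T n x⟫).re)
    (hTM : ∀ x, WeakTendsto (fun n => T n x) (M x)) {x z v : ℕ → H} {xs zs vs : H}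
    (hx : WeakTendsto x xs) (hzv : ∀ n, (z n, v n) ∈ A.graph ∧ T n (z n) + v n = x n)
    (hzs : (zs, vs) ∈ A.graph) (hMzs : M zs + vs = xs) : Tendsto z atTop (𝓝 zs) := by
  have hM : Coercive M := ⟨lam, hlam, mul_sq_le_re_inner_of_weakTendsto hT hTM⟩
  obtain ⟨Cx, hCx⟩ := hx.exists_norm_le
  obtain ⟨CT, hCT⟩ := exists_opNorm_le_of_weakTendsto hTM
  have hCT0 : 0 ≤ CT := (norm_nonneg _).trans (hCT 0)
  have hbound : ∀ n, ‖(z n, v n)‖ ≤ (1 + lam + CT) / lam * Cx := fun n => calc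
    ‖(z n, v n)‖ ≤ (1 + lam + ‖T n‖) / lam * ‖T n (z n) + v n‖ :=
      hA.norm_le_of_coercive hlam (hT n) (hzv n).1
    _ ≤ (1 + lam + CT) / lam * Cx := by
      rw [(hzv n).2]
      gcongr
      exacts [hCT n, hCx n]
  refine tendsto_of_subseq_tendsto fun ns hns => ?_
  obtain ⟨φ, hφ, z', hz'⟩ :=
    hAcpt.exists_strictMono_tendsto (fun n => (hzv (ns n)).1) fun n => hbound (ns n)
  have hk : Tendsto (ns ∘ φ) atTop atTop := hns.comp hφ.tendsto_atTop
  have hv' : WeakTendsto (v ∘ ns ∘ φ) (xs - M z') :=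
    weakTendsto_of_apply_add_eq (fun n => hCT _) (fun u => (hTM u).comp hk) hz' (hx.comp hk)
      (fun n => (hzv _).2) (add_sub_cancel _ _)
  have hmem : (z', xs - M z') ∈ A.graph :=
    hA.mem_graph_of_weakTendsto (fun n => (hzv _).1) (.of_tendsto hz') hv'
  have hz's : z' = zs := congrArg Prod.fst <|
    (hA.existsUnique_add_eq hM xs).unique ⟨hmem, add_sub_cancel _ _⟩ ⟨hzs, hMzs⟩
  exact ⟨φ, hz's ▸ hz'⟩

end IsSkewAdjoint

end SkewAdjoint

theorem statement13_general {H : Type*} [NormedAddCommGroup H] [InnerProductSpace ℂ H]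
    [CompleteSpace H]
    (M : H →L[ℂ] H) (Mseq : ℕ → H →L[ℂ] H) (A : H →ₗ.[ℂ] H)
    (hskew : ∀ x y, ((x, -y) ∈ A.graph ↔
      ∀ u v, (u, v) ∈ A.graph → ⟪y, u⟫ = ⟪x, v⟫))
    (hMconv : ∀ x y : H, Tendsto (fun n => ⟪y, Mseq n x⟫) atTop (𝓝 ⟪y, M x⟫))
    (hAcpt : CompactIncl A)
    (lam : ℝ) (hlam : 0 < lam)
    (hMn : ∀ n (x : H), lam * ‖x‖ ^ 2 ≤ (⟪x, Mseq n x⟫).re)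
    (x : ℕ → H) (xs : H)
    (hx : ∀ y : H, Tendsto (fun n => ⟪y, x n⟫) atTop (𝓝 ⟪y, xs⟫)) :
    -- M + A is bijective from dom A onto H
    (∀ f : H, ∃! z : H × H, z ∈ A.graph ∧ M z.1 + z.2 = f) ∧
    -- (Mₙ + A)⁻¹ xₙ converges weakly in dom A (graph inner product) to (M + A)⁻¹ x
    (∀ (z : ℕ → H) (v : ℕ → H) (zs vs : H),
      (∀ n, (z n, v n) ∈ A.graph ∧ Mseq n (z n) + v n = x n) →
      (zs, vs) ∈ A.graph → M zs + vs = xs →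
      ∀ y w, (y, w) ∈ A.graph →
        Tendsto (fun n => ⟪y, z n⟫ + ⟪w, v n⟫) atTop
          (𝓝 (⟪y, zs⟫ + ⟪w, vs⟫))) := by
  have hA : IsSkewAdjoint A := hskew
  have hM : Coercive M := ⟨lam, hlam, mul_sq_le_re_inner_of_weakTendsto hMn hMconv⟩
  refine ⟨hA.existsUnique_add_eq hM, fun z v zs vs hzv hzs hMzs y w _ => ?_⟩
  have hz : Tendsto z atTop (𝓝 zs) :=
    hA.tendsto_of_compactIncl hAcpt hlam hMn hMconv hx hzv hzs hMzs
  obtain ⟨C, hC⟩ := exists_opNorm_le_of_weakTendsto hMconv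
  have hv : WeakTendsto v vs :=
    weakTendsto_of_apply_add_eq hC hMconv hz hx (fun n => (hzv n).2) hMzs
  exact (WeakTendsto.of_tendsto hz y).add (hv w)

/-- Lemma 4.5: if `Mₙ → M` in the weak operator topology, `A` is skew-adjoint
with compact inclusion `dom A ⊆ H̃`, `Re (Mₙ x, x) ≥ λ ‖x‖²`, and `xₙ ⇀ x`,
then `M + A` is invertible and `(Mₙ + A)⁻¹ xₙ ⇀ (M + A)⁻¹ x` weakly in
`dom A`. -/
theorem statement13 {H : Type*} [NormedAddCommGroup H] [InnerProductSpace ℂ H]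
    [CompleteSpace H]
    (M : H →L[ℂ] H) (Mseq : ℕ → H →L[ℂ] H) (A : H →ₗ.[ℂ] H)
    (hAdense : Dense (A.domain : Set H))
    (hskew : ∀ x y, ((x, -y) ∈ A.graph ↔
      ∀ u v, (u, v) ∈ A.graph → ⟪y, u⟫ = ⟪x, v⟫))
    (hMconv : ∀ x y : H, Tendsto (fun n => ⟪y, Mseq n x⟫) atTop (𝓝 ⟪y, M x⟫))
    (hAcpt : CompactIncl A)
    (lam : ℝ) (hlam : 0 < lam)
    (hMn : ∀ n (x : H), lam * ‖x‖ ^ 2 ≤ (⟪x, Mseq n x⟫).re)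
    (x : ℕ → H) (xs : H)
    (hx : ∀ y : H, Tendsto (fun n => ⟪y, x n⟫) atTop (𝓝 ⟪y, xs⟫)) :
    -- M + A is bijective from dom A onto H
    (∀ f : H, ∃! z : H × H, z ∈ A.graph ∧ M z.1 + z.2 = f) ∧
    -- (Mₙ + A)⁻¹ xₙ converges weakly in dom A (graph inner product) to (M + A)⁻¹ x
    (∀ (z : ℕ → H) (v : ℕ → H) (zs vs : H),
      (∀ n, (z n, v n) ∈ A.graph ∧ Mseq n (z n) + v n = x n) →
      (zs, vs) ∈ A.graph → M zs + vs = xs →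
      ∀ y w, (y, w) ∈ A.graph →
        Tendsto (fun n => ⟪y, z n⟫ + ⟪w, v n⟫) atTop
          (𝓝 (⟪y, zs⟫ + ⟪w, vs⟫))) :=
  statement13_general M Mseq A hskew hMconv hAcpt lam hlam hMn x xs hx

end DtNPaper
end
end

section
/- Let m ∈ L(H₀) be a bounded (not necessarily coercive) operator and a ∈ L(H₁) coercive. Let b̊ be the restriction of the form b(u,v) = (aGu, Gv)_{H₁} + (mu, v)_{H₀} to dom(G̊) × dom(G̊), and let T̊ ∈ L(dom(G̊)) be the bounded operator with b̊(u,v) = (T̊u, v)_{dom(G̊)}. Assume ran(T̊) is closed in dom(G̊). Then the domain of the Dirichlet-to-Neumann graph Λ equals { u₀ ∈ BD(G) : (Gu₀, π_{BD(D)} a*Gv)_{BD(D)} = 0 for all v ∈ ker(m* − Da*G̊) }, where ker(m* − Da*G̊) = { v ∈ dom(G̊) : a*G̊v ∈ dom(D) and Da*G̊v = m*v }. -/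
/-!
Identify `dom G̊` with the closed subspace `K = graph G̊` of `H₀ ⊕₂ H₁`. Because `G̊ = -D*`, the
complement `Kᗮ` is the graph of `D` with its coordinates swapped, and `T̊` is the compression
`P_K M|_K` of the diagonal operator `M = m ⊕ a`. For `u₀ ∈ BD(G)` with `p₀ = G u₀`, membership
`u₀ ∈ dom Λ` says that `M ((u₀, p₀) + x) ∈ Kᗮ` for some `x ∈ K`, i.e. `P_K M (u₀, p₀) ∈ ran T̊`.
As `ran T̊` is closed, this is orthogonality of `M (u₀, p₀)` to `ker T̊* = {y ∈ K : M* y ∈ Kᗮ}`,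
which is `ker (m* - D a* G̊)`. Finally, for `(x, y)` in the graph of `D` the pairing
`(x, p₀) + (y, u₀)` does not change when `(x, y)` is replaced by its `BD(D)`-component, and this
turns the orthogonality into the one against `π_{BD(D)} a* G v`.
-/

open Filter Topology

noncomputable section

namespace DtNPaper

local notation "⟪" x ", " y "⟫" => (inner ℂ x y : ℂ)

variable {H₀ H₁ HS : Type*}
  [NormedAddCommGroup H₀] [InnerProductSpace ℂ H₀] [CompleteSpace H₀]
  [NormedAddCommGroup H₁] [InnerProductSpace ℂ H₁] [CompleteSpace H₁]

section GraphL2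

variable {E F : Type*} [NormedAddCommGroup E] [InnerProductSpace ℂ E]
  [NormedAddCommGroup F] [InnerProductSpace ℂ F]

def graphL2 (T : E →ₗ.[ℂ] F) : Submodule ℂ (WithLp 2 (E × F)) :=
  T.graph.comap (WithLp.linearEquiv 2 ℂ (E × F)).toLinearMap

def flipGraphL2 (T : F →ₗ.[ℂ] E) : Submodule ℂ (WithLp 2 (E × F)) :=
  T.graph.comap ((LinearEquiv.prodComm ℂ E F).toLinearMap ∘ₗ
    (WithLp.linearEquiv 2 ℂ (E × F)).toLinearMap)

@[simp]
theorem toLp_mem_graphL2 {T : E →ₗ.[ℂ] F} {u : E} {p : F} :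
    WithLp.toLp 2 (u, p) ∈ graphL2 T ↔ (u, p) ∈ T.graph :=
  Iff.rfl

@[simp]
theorem toLp_mem_flipGraphL2 {T : F →ₗ.[ℂ] E} {u : E} {p : F} :
    WithLp.toLp 2 (u, p) ∈ flipGraphL2 T ↔ (p, u) ∈ T.graph :=
  Iff.rfl

theorem isClosed_flipGraphL2 {T : F →ₗ.[ℂ] E} (hT : IsClosed (T.graph : Set (F × E))) :
    IsClosed (flipGraphL2 T : Set (WithLp 2 (E × F))) :=
  hT.preimage (f := fun z : WithLp 2 (E × F) => ((WithLp.ofLp z).2, (WithLp.ofLp z).1))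
    (by fun_prop)

theorem graphL2_eq_orthogonal {Ti : E →ₗ.[ℂ] F} {T : F →ₗ.[ℂ] E}
    (h : ∀ u w, (u, w) ∈ Ti.graph ↔ ∀ q s, (q, s) ∈ T.graph → ⟪w, q⟫ = -⟪u, s⟫) :
    graphL2 Ti = (flipGraphL2 T)ᗮ := by
  ext ⟨u, w⟩
  rw [toLp_mem_graphL2, h, Submodule.mem_orthogonal']
  have key : ∀ q s, ⟪w, q⟫ = -⟪u, s⟫ ↔ ⟪WithLp.toLp 2 (u, w), WithLp.toLp 2 (s, q)⟫ = 0 :=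
    fun _ _ => eq_comm.trans neg_eq_iff_add_eq_zero
  exact ⟨fun hw z hz => (key _ _).1 (hw _ _ hz), fun hw q s hqs => (key q s).2 (hw _ hqs)⟩

theorem memBD_iff_mem_orthogonal {T Ti : E →ₗ.[ℂ] F} {u : E} :
    memBD T Ti u ↔ ∃ p, (u, p) ∈ T.graph ∧ WithLp.toLp 2 (u, p) ∈ (graphL2 Ti)ᗮ := by
  refine exists_congr fun p => and_congr_right fun _ => ?_
  rw [Submodule.mem_orthogonal]
  exact ⟨fun h z hz => h _ _ hz, fun h v w hvw => h (WithLp.toLp 2 (v, w)) hvw⟩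

theorem mem_graph_of_mem_domain {T Ti : E →ₗ.[ℂ] F} (hle : Ti.graph ≤ T.graph)
    {u : E} {p : F} (hu : u ∈ Ti.domain) (hup : (u, p) ∈ T.graph) : (u, p) ∈ Ti.graph := by
  have hTi := Ti.mem_graph ⟨u, hu⟩
  rwa [T.mem_graph_snd_inj (hle hTi) hup rfl] at hTi

theorem inner_add_inner_eq_of_sub_mem_domain {G : E →ₗ.[ℂ] F} {D Di : F →ₗ.[ℂ] E}
    (hDiD : Di.graph ≤ D.graph) (hDi : graphL2 Di = (flipGraphL2 G)ᗮ)
    {x q : F} {y dq : E} (hxy : (x, y) ∈ D.graph) (hq : (q, dq) ∈ D.graph)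
    (hxq : x - q ∈ Di.domain) {u : E} {p : F} (hup : (u, p) ∈ G.graph) :
    ⟪q, p⟫ + ⟪dq, u⟫ = ⟪x, p⟫ + ⟪y, u⟫ := by
  have hdiff : WithLp.toLp 2 (x - q, y - dq) ∈ graphL2 Di :=
    mem_graph_of_mem_domain hDiD hxq (D.graph.sub_mem hxy hq)
  rw [hDi] at hdiff
  have h := (Submodule.mem_orthogonal' _ _).1 hdiff (WithLp.toLp 2 (p, u)) hup
  simp only [WithLp.prod_inner_apply, inner_sub_left] at h
  linear_combination -h

end GraphL2

section Complete

variable {E F : Type*} [NormedAddCommGroup E] [InnerProductSpace ℂ E] [CompleteSpace E]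
  [NormedAddCommGroup F] [InnerProductSpace ℂ F] [CompleteSpace F]

theorem orthogonal_graphL2_eq {Ti : E →ₗ.[ℂ] F} {T : F →ₗ.[ℂ] E}
    (hT : IsClosed (T.graph : Set (F × E))) (h : graphL2 Ti = (flipGraphL2 T)ᗮ) :
    (graphL2 Ti)ᗮ = flipGraphL2 T := by
  have : CompleteSpace (flipGraphL2 T) := (isClosed_flipGraphL2 hT).completeSpace_coe
  rw [h, Submodule.orthogonal_orthogonal]

theorem memBD_iff {T Ti : E →ₗ.[ℂ] F} {Tt : F →ₗ.[ℂ] E}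
    (hTt : IsClosed (Tt.graph : Set (F × E))) (h : graphL2 Ti = (flipGraphL2 Tt)ᗮ) {u : E} :
    memBD T Ti u ↔ ∃ p, (u, p) ∈ T.graph ∧ (p, u) ∈ Tt.graph := by
  rw [memBD_iff_mem_orthogonal, orthogonal_graphL2_eq hTt h]
  rfl

theorem exists_memBD_sub_mem_domain {T Ti : E →ₗ.[ℂ] F} {Tt : F →ₗ.[ℂ] E}
    (hle : Ti.graph ≤ T.graph) (h : graphL2 Ti = (flipGraphL2 Tt)ᗮ) {u : E} {p : F}
    (hup : (u, p) ∈ T.graph) : ∃ u₀, memBD T Ti u₀ ∧ u - u₀ ∈ Ti.domain := by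
  have : CompleteSpace (graphL2 Ti) := by rw [h]; infer_instance
  set z := WithLp.toLp 2 (u, p)
  set π := (graphL2 Ti).starProjection z
  have hπ : WithLp.ofLp π ∈ Ti.graph := (graphL2 Ti).starProjection_apply_mem z
  refine ⟨u - π.fst, memBD_iff_mem_orthogonal.mpr ⟨p - π.snd, ?_, ?_⟩, ?_⟩
  · exact T.graph.sub_mem hup (hle hπ)
  · exact (graphL2 Ti).sub_starProjection_mem_orthogonal z
  · rw [sub_sub_cancel]
    exact Ti.mem_domain_of_mem_graph hπ

end Complete

section Fredholm

variable {E : Type*} [NormedAddCommGroup E] [InnerProductSpace ℂ E] [CompleteSpace E]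

theorem exists_apply_add_mem_orthogonal_iff (K : Submodule ℂ E) [CompleteSpace K]
    (M : E →L[ℂ] E)
    (hran : IsClosed (Set.range (K.orthogonalProjectionOnto ∘L M ∘L K.subtypeL)))
    (z₀ : E) :
    (∃ x ∈ K, M (z₀ + x) ∈ Kᗮ) ↔
      ∀ y ∈ K, ContinuousLinearMap.adjoint M y ∈ Kᗮ → ⟪y, M z₀⟫ = 0 := by
  constructor
  · rintro ⟨x, hx, hMx⟩ y hy hMy
    have h₁ : ⟪y, M (z₀ + x)⟫ = 0 := (Submodule.mem_orthogonal _ _).1 hMx y hy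
    have h₂ : ⟪y, M x⟫ = 0 := by
      rw [← ContinuousLinearMap.adjoint_inner_left, inner_eq_zero_symm]
      exact (Submodule.mem_orthogonal _ _).1 hMy x hx
    rwa [map_add, inner_add_right, h₂, add_zero] at h₁
  · intro hF
    set T := K.orthogonalProjectionOnto ∘L M ∘L K.subtypeL
    set R := LinearMap.range (T : K →ₗ[ℂ] K)
    have : CompleteSpace R := hran.completeSpace_coe
    have hf : K.orthogonalProjectionOnto (M z₀) ∈ Rᗮᗮ := by
      rw [Submodule.mem_orthogonal]
      intro y hy
      rw [Submodule.inner_orthogonalProjectionOnto_eq_of_mem_left]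
      refine hF y y.2 ((Submodule.mem_orthogonal' _ _).2 fun x hx => ?_)
      rw [ContinuousLinearMap.adjoint_inner_left,
        ← Submodule.inner_orthogonalProjectionOnto_eq_of_mem_left]
      exact (Submodule.mem_orthogonal' _ _).1 hy (T ⟨x, hx⟩) ⟨_, rfl⟩
    rw [Submodule.orthogonal_orthogonal] at hf
    obtain ⟨x, hx⟩ := hf
    refine ⟨-x, neg_mem x.2, ?_⟩
    rw [← Submodule.orthogonalProjectionOnto_eq_zero_iff, map_add, map_neg, map_add, map_neg,
      ← hx]
    exact add_neg_cancel _

end Fredholm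

section Diagonal

variable {E F : Type*} [NormedAddCommGroup E] [InnerProductSpace ℂ E]
  [NormedAddCommGroup F] [InnerProductSpace ℂ F]

def diagL2 (m : E →L[ℂ] E) (a : F →L[ℂ] F) : WithLp 2 (E × F) →L[ℂ] WithLp 2 (E × F) :=
  (WithLp.prodContinuousLinearEquiv 2 ℂ E F).symm.toContinuousLinearMap ∘L m.prodMap a ∘L
    (WithLp.prodContinuousLinearEquiv 2 ℂ E F).toContinuousLinearMap

@[simp]
theorem diagL2_toLp (m : E →L[ℂ] E) (a : F →L[ℂ] F) (u : E) (p : F) :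
    diagL2 m a (WithLp.toLp 2 (u, p)) = WithLp.toLp 2 (m u, a p) :=
  rfl

theorem adjoint_diagL2 [CompleteSpace E] [CompleteSpace F] (m : E →L[ℂ] E) (a : F →L[ℂ] F) :
    ContinuousLinearMap.adjoint (diagL2 m a) =
      diagL2 (ContinuousLinearMap.adjoint m) (ContinuousLinearMap.adjoint a) := by
  refine ((ContinuousLinearMap.eq_adjoint_iff _ _).2 fun x y => ?_).symm
  rcases x with ⟨u, p⟩
  rcases y with ⟨v, s⟩
  simp [ContinuousLinearMap.adjoint_inner_left]

end Diagonal

section FormOperator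

variable {E F : Type*} [NormedAddCommGroup E] [InnerProductSpace ℂ E]
  [NormedAddCommGroup F] [InnerProductSpace ℂ F]
  {Gi : E →ₗ.[ℂ] F} {a : F →L[ℂ] F} {m : E →L[ℂ] E} {T0 : E → E} {T0G : E → F}

theorem starProjection_diagL2_eq [CompleteSpace (graphL2 Gi)]
    (hT0mem : ∀ u w, (u, w) ∈ Gi.graph → (T0 u, T0G u) ∈ Gi.graph)
    (hT0form : ∀ u w v s, (u, w) ∈ Gi.graph → (v, s) ∈ Gi.graph →
      ⟪s, a w⟫ + ⟪v, m u⟫ = ⟪v, T0 u⟫ + ⟪s, T0G u⟫)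
    {u : E} {w : F} (huw : (u, w) ∈ Gi.graph) :
    (graphL2 Gi).starProjection (diagL2 m a (WithLp.toLp 2 (u, w))) =
      WithLp.toLp 2 (T0 u, T0G u) := by
  refine Submodule.eq_starProjection_of_mem_of_inner_eq_zero (hT0mem u w huw) fun z hz => ?_
  rcases z with ⟨v, s⟩
  rw [inner_eq_zero_symm]
  simp only [diagL2_toLp, ← WithLp.toLp_sub, WithLp.prod_inner_apply, Prod.mk_sub_mk,
    inner_sub_right]
  linear_combination hT0form u w v s huw hz

theorem isClosed_range_orthogonalProjectionOnto_diagL2 [CompleteSpace (graphL2 Gi)]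
    (hT0mem : ∀ u w, (u, w) ∈ Gi.graph → (T0 u, T0G u) ∈ Gi.graph)
    (hT0form : ∀ u w v s, (u, w) ∈ Gi.graph → (v, s) ∈ Gi.graph →
      ⟪s, a w⟫ + ⟪v, m u⟫ = ⟪v, T0 u⟫ + ⟪s, T0G u⟫)
    (hT0ran : IsClosed {z : E × F | ∃ u w, (u, w) ∈ Gi.graph ∧ z = (T0 u, T0G u)}) :
    IsClosed (Set.range ((graphL2 Gi).orthogonalProjectionOnto ∘L diagL2 m a ∘L
      (graphL2 Gi).subtypeL)) := by
  convert hT0ran.preimage (f := fun x : graphL2 Gi => WithLp.ofLp (x : WithLp 2 (E × F)))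
    (by fun_prop)
  ext x
  constructor
  · rintro ⟨⟨⟨u, w⟩, huw⟩, rfl⟩
    exact ⟨u, w, huw, congrArg WithLp.ofLp (starProjection_diagL2_eq hT0mem hT0form huw)⟩
  · rintro ⟨u, w, huw, hx⟩
    refine ⟨⟨WithLp.toLp 2 (u, w), huw⟩, Subtype.ext ?_⟩
    exact (starProjection_diagL2_eq hT0mem hT0form huw).trans (congrArg (WithLp.toLp 2) hx.symm)

end FormOperator

section DirichletToNeumann

variable {E F : Type*} [NormedAddCommGroup E] [InnerProductSpace ℂ E] [CompleteSpace E]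
  [NormedAddCommGroup F] [InnerProductSpace ℂ F] [CompleteSpace F]
  {G Gi : E →ₗ.[ℂ] F} {D Di : F →ₗ.[ℂ] E} {a : F →L[ℂ] F} {m : E →L[ℂ] E}

theorem exists_mem_dtnGraph_iff (hGiG : Gi.graph ≤ G.graph) (hDiD : Di.graph ≤ D.graph)
    (hDi : graphL2 Di = (flipGraphL2 G)ᗮ) (hK : (graphL2 Gi)ᗮ = flipGraphL2 D)
    {u₀ : E} {p₀ : F} (hBD : memBD G Gi u₀) (hp₀ : (u₀, p₀) ∈ G.graph) :
    (∃ q₀, (u₀, q₀) ∈ dtnGraph G Gi D Di a m) ↔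
      ∃ x ∈ graphL2 Gi, diagL2 m a (WithLp.toLp 2 (u₀, p₀) + x) ∈ (graphL2 Gi)ᗮ := by
  rw [hK]
  constructor
  · rintro ⟨_, u, p, hup, hD, _, hdom, _⟩
    refine ⟨WithLp.toLp 2 (u - u₀, p - p₀),
      mem_graph_of_mem_domain hGiG hdom (G.graph.sub_mem hup hp₀), ?_⟩
    rwa [← WithLp.toLp_add, Prod.mk_add_mk, add_sub_cancel, add_sub_cancel]
  · rintro ⟨⟨u₁, p₁⟩, hx, hD⟩
    obtain ⟨q₀, hq₀, hdom⟩ := exists_memBD_sub_mem_domain hDiD hDi hD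
    refine ⟨q₀, u₀ + u₁, p₀ + p₁, G.graph.add_mem hp₀ (hGiG hx), hD, hBD, ?_, hq₀, hdom⟩
    rw [add_sub_cancel_left]
    exact Gi.mem_domain_of_mem_graph hx

theorem forall_inner_boundary_eq_zero_iff (hDiD : Di.graph ≤ D.graph)
    (hDi : graphL2 Di = (flipGraphL2 G)ᗮ) (hK : (graphL2 Gi)ᗮ = flipGraphL2 D)
    {u₀ : E} {p₀ : F} (hp₀ : (u₀, p₀) ∈ G.graph) (hDp₀ : (p₀, u₀) ∈ D.graph) :
    (∀ v w q dq p dp, (v, w) ∈ Gi.graph →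
        ((ContinuousLinearMap.adjoint a) w, (ContinuousLinearMap.adjoint m) v) ∈ D.graph →
        memBD D Di q → (ContinuousLinearMap.adjoint a) w - q ∈ Di.domain →
        (q, dq) ∈ D.graph → (u₀, p) ∈ G.graph → (p, dp) ∈ D.graph →
        ⟪q, p⟫ + ⟪dq, dp⟫ = 0) ↔
      ∀ y ∈ graphL2 Gi, ContinuousLinearMap.adjoint (diagL2 m a) y ∈ (graphL2 Gi)ᗮ →
        ⟪y, diagL2 m a (WithLp.toLp 2 (u₀, p₀))⟫ = 0 := by
  have key : ∀ {v w q dq},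
      ((ContinuousLinearMap.adjoint a) w, (ContinuousLinearMap.adjoint m) v) ∈ D.graph →
      (q, dq) ∈ D.graph → (ContinuousLinearMap.adjoint a) w - q ∈ Di.domain →
      ⟪q, p₀⟫ + ⟪dq, u₀⟫ = ⟪WithLp.toLp 2 (v, w), diagL2 m a (WithLp.toLp 2 (u₀, p₀))⟫ := by
    intro v w q dq hker hq hdom
    rw [inner_add_inner_eq_of_sub_mem_domain hDiD hDi hker hq hdom hp₀]
    simp [ContinuousLinearMap.adjoint_inner_left, add_comm]
  simp only [adjoint_diagL2, hK]
  constructor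
  · rintro h ⟨v, w⟩ hvw hker
    rw [diagL2_toLp, toLp_mem_flipGraphL2] at hker
    obtain ⟨q, ⟨dq, hq, hqBD⟩, hdom⟩ := exists_memBD_sub_mem_domain hDiD hDi hker
    rw [← key hker hq hdom]
    exact h v w q dq p₀ u₀ hvw hker ⟨dq, hq, hqBD⟩ hdom hq hp₀ hDp₀
  · intro h v w q dq p dp hvw hker _ hdom hq hp hpD
    obtain rfl := G.mem_graph_snd_inj hp hp₀ rfl
    obtain rfl := D.mem_graph_snd_inj hpD hDp₀ rfl
    rw [key hker hq hdom]
    exact h _ hvw (by rwa [diagL2_toLp, toLp_mem_flipGraphL2])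

end DirichletToNeumann

theorem statement16_general
    (G Gi : H₀ →ₗ.[ℂ] H₁) (D Di : H₁ →ₗ.[ℂ] H₀)
    (hDclosed : IsClosed (D.graph : Set (H₁ × H₀)))
    (hGi : ∀ u w, (u, w) ∈ Gi.graph ↔ ∀ q s, (q, s) ∈ D.graph → ⟪w, q⟫ = -⟪u, s⟫)
    (hDi : ∀ q w, (q, w) ∈ Di.graph ↔ ∀ u p, (u, p) ∈ G.graph → ⟪w, u⟫ = -⟪q, p⟫)
    (hGiG : Gi.graph ≤ G.graph) (hDiD : Di.graph ≤ D.graph)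
    (a : H₁ →L[ℂ] H₁) (m : H₀ →L[ℂ] H₀)
    (T0 : H₀ → H₀) (T0G : H₀ → H₁)
    (hT0mem : ∀ u w, (u, w) ∈ Gi.graph → (T0 u, T0G u) ∈ Gi.graph)
    (hT0form : ∀ u w v s, (u, w) ∈ Gi.graph → (v, s) ∈ Gi.graph →
      ⟪s, a w⟫ + ⟪v, m u⟫ = ⟪v, T0 u⟫ + ⟪s, T0G u⟫)
    (hT0ran : IsClosed
      {z : H₀ × H₁ | ∃ u w, (u, w) ∈ Gi.graph ∧ z = (T0 u, T0G u)}) :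
    ∀ u₀ : H₀,
      (∃ q₀, (u₀, q₀) ∈ dtnGraph G Gi D Di a m) ↔
      (memBD G Gi u₀ ∧
        ∀ v w q dq p dp, (v, w) ∈ Gi.graph →
          ((ContinuousLinearMap.adjoint a) w,
            (ContinuousLinearMap.adjoint m) v) ∈ D.graph →
          memBD D Di q → (ContinuousLinearMap.adjoint a) w - q ∈ Di.domain →
          (q, dq) ∈ D.graph → (u₀, p) ∈ G.graph → (p, dp) ∈ D.graph →
          ⟪q, p⟫ + ⟪dq, dp⟫ = 0) := by
  have hGi' := graphL2_eq_orthogonal hGi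
  have hDi' := graphL2_eq_orthogonal hDi
  have hK := orthogonal_graphL2_eq hDclosed hGi'
  have : CompleteSpace (graphL2 Gi) := by rw [hGi']; infer_instance
  have hran := isClosed_range_orthogonalProjectionOnto_diagL2 hT0mem hT0form hT0ran
  intro u₀
  constructor
  · intro hΛ
    have hBD : memBD G Gi u₀ := let ⟨_, _, _, _, _, h, _⟩ := hΛ; h
    obtain ⟨p₀, hp₀, hDp₀⟩ := (memBD_iff hDclosed hGi').1 hBD
    rw [exists_mem_dtnGraph_iff hGiG hDiD hDi' hK hBD hp₀,
      exists_apply_add_mem_orthogonal_iff _ _ hran] at hΛ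
    exact ⟨hBD, (forall_inner_boundary_eq_zero_iff hDiD hDi' hK hp₀ hDp₀).2 hΛ⟩
  · rintro ⟨hBD, hcond⟩
    obtain ⟨p₀, hp₀, hDp₀⟩ := (memBD_iff hDclosed hGi').1 hBD
    rw [exists_mem_dtnGraph_iff hGiG hDiD hDi' hK hBD hp₀,
      exists_apply_add_mem_orthogonal_iff _ _ hran]
    exact (forall_inner_boundary_eq_zero_iff hDiD hDi' hK hp₀ hDp₀).1 hcond

/-- Proposition 5.3: if `ran T̊` is closed in `dom G̊`, then the domain of the
Dirichlet-to-Neumann graph `Λ` equals the set of `u₀ ∈ BD(G)` such that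
`(G u₀, π_{BD(D)} a* G v)_{BD(D)} = 0` for all `v ∈ ker (m* - D a* G̊)`. -/
theorem statement16
    (G Gi : H₀ →ₗ.[ℂ] H₁) (D Di : H₁ →ₗ.[ℂ] H₀)
    (hGdense : Dense (G.domain : Set H₀)) (hDdense : Dense (D.domain : Set H₁))
    (hGclosed : IsClosed (G.graph : Set (H₀ × H₁)))
    (hDclosed : IsClosed (D.graph : Set (H₁ × H₀)))
    (hGi : ∀ u w, (u, w) ∈ Gi.graph ↔ ∀ q s, (q, s) ∈ D.graph → ⟪w, q⟫ = -⟪u, s⟫)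
    (hDi : ∀ q w, (q, w) ∈ Di.graph ↔ ∀ u p, (u, p) ∈ G.graph → ⟪w, u⟫ = -⟪q, p⟫)
    (hGiG : Gi.graph ≤ G.graph) (hDiD : Di.graph ≤ D.graph)
    (a : H₁ →L[ℂ] H₁) (m : H₀ →L[ℂ] H₀) (ha : Coercive a)
    (T0 : H₀ → H₀) (T0G : H₀ → H₁)
    (hT0mem : ∀ u w, (u, w) ∈ Gi.graph → (T0 u, T0G u) ∈ Gi.graph)
    (hT0form : ∀ u w v s, (u, w) ∈ Gi.graph → (v, s) ∈ Gi.graph →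
      ⟪s, a w⟫ + ⟪v, m u⟫ = ⟪v, T0 u⟫ + ⟪s, T0G u⟫)
    (hT0ran : IsClosed
      {z : H₀ × H₁ | ∃ u w, (u, w) ∈ Gi.graph ∧ z = (T0 u, T0G u)}) :
    ∀ u₀ : H₀,
      (∃ q₀, (u₀, q₀) ∈ dtnGraph G Gi D Di a m) ↔
      (memBD G Gi u₀ ∧
        ∀ v w q dq p dp, (v, w) ∈ Gi.graph →
          ((ContinuousLinearMap.adjoint a) w,
            (ContinuousLinearMap.adjoint m) v) ∈ D.graph →
          memBD D Di q → (ContinuousLinearMap.adjoint a) w - q ∈ Di.domain →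
          (q, dq) ∈ D.graph → (u₀, p) ∈ G.graph → (p, dp) ∈ D.graph →
          ⟪q, p⟫ + ⟪dq, dp⟫ = 0) :=
  statement16_general G Gi D Di hDclosed hGi hDi hGiG hDiD a m T0 T0G hT0mem hT0form hT0ran

end DtNPaper
end
end

section
/- Let m ∈ L(H₀) be bounded and a ∈ L(H₁) coercive, and let T ∈ L(dom(G)) be the bounded operator with (Tu, v)_{dom(G)} = (aGu, Gv)_{H₁} + (mu, v)_{H₀} for all u, v ∈ dom(G). Assume ran(T) is closed in dom(G). Then the domain of the inverse Dirichlet-to-Neumann graph Λ^{-1} equals { q₀ ∈ BD(D) : (Dq₀, π_{BD(G)}v)_{BD(G)} = 0 for all v ∈ ker(m* − D̊a*G) }, where ker(m* − D̊a*G) = { v ∈ dom(G) : a*Gv ∈ dom(D̊) and D̊a*Gv = m*v }. -/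
open Filter Topology

noncomputable section

namespace DtNPaper

local notation "⟪" x ", " y "⟫" => (inner ℂ x y : ℂ)

variable {H₀ H₁ HS : Type*}
  [NormedAddCommGroup H₀] [InnerProductSpace ℂ H₀] [CompleteSpace H₀]
  [NormedAddCommGroup H₁] [InnerProductSpace ℂ H₁] [CompleteSpace H₁]

/-!
Everything runs through the boundary pairing `⟪v, D q⟫ + ⟪G v, q⟫`, which vanishes when
`v ∈ dom G̊` or `q ∈ dom D̊`. If `q₀ = π_{BD(D)} (a G u)` for a solution `u`, the pairing of
`π_{BD(G)} v` with `q₀` equals that of `v` with `a G u`, and this is zero for `v` in the adjoint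
kernel. Conversely, `q₀ ∈ BD(D)` satisfies `G D q₀ = q₀`, so `(D q₀, q₀)` is a point of the graph
of `G`. Inside `dom G` the orthogonal complement of `ran T` is `ker (m* − D̊ a* G)`, so, `ran T`
being closed, the hypothesis puts `D q₀` into `ran T`. Writing `D q₀ = T u`, Green's formula for
the form shows `m u − D a G u = 0` and `a G u − q₀ ∈ dom D̊`.
-/

section ProdInner

variable {E F : Type*} [NormedAddCommGroup E] [InnerProductSpace ℂ E]
  [NormedAddCommGroup F] [InnerProductSpace ℂ F]

theorem prod_eq_zero_of_inner_self_add_inner_self {z : E × F}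
    (h : ⟪z.1, z.1⟫ + ⟪z.2, z.2⟫ = 0) : z = 0 := by
  have : WithLp.toLp 2 z = 0 := inner_self_eq_zero.1 h
  simpa using congrArg WithLp.ofLp this

variable [CompleteSpace E] [CompleteSpace F]

theorem exists_mem_forall_inner_sub_eq_zero (S : Submodule ℂ (E × F))
    (hS : IsClosed (S : Set (E × F))) (z : E × F) :
    ∃ y ∈ S, ∀ s ∈ S, ⟪z.1 - y.1, s.1⟫ + ⟪z.2 - y.2, s.2⟫ = 0 := by
  let K : Submodule ℂ (WithLp 2 (E × F)) :=
    S.comap (WithLp.linearEquiv 2 ℂ (E × F)).toLinearMap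
  have : CompleteSpace K :=
    (hS.preimage (WithLp.prodContinuousLinearEquiv 2 ℂ E F).continuous).completeSpace_coe
  obtain ⟨y, hy, w, hw, hyw⟩ :=
    Submodule.exists_add_mem_mem_orthogonal (K := K) (WithLp.toLp 2 z)
  refine ⟨y.ofLp, hy, fun s hs => ?_⟩
  have hz : z = y.ofLp + w.ofLp := by simpa using congrArg WithLp.ofLp hyw
  simpa [hz] using (Submodule.mem_orthogonal' K w).1 hw (WithLp.toLp 2 s) (by simpa [K] using hs)

theorem mem_of_forall_inner_eq_zero (S : Submodule ℂ (E × F))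
    (hS : IsClosed (S : Set (E × F))) {z : E × F}
    (h : ∀ w : E × F, (∀ s ∈ S, ⟪w.1, s.1⟫ + ⟪w.2, s.2⟫ = 0) →
      ⟪w.1, z.1⟫ + ⟪w.2, z.2⟫ = 0) :
    z ∈ S := by
  obtain ⟨y, hy, horth⟩ := exists_mem_forall_inner_sub_eq_zero S hS z
  have hzz := h (z - y) horth
  have hzy := horth y hy
  have : z - y = 0 := prod_eq_zero_of_inner_self_add_inner_self <| by
    simp only [Prod.fst_sub, Prod.snd_sub, inner_sub_right] at hzz hzy ⊢
    linear_combination hzz - hzy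
  rwa [sub_eq_zero.1 this]

end ProdInner

section Graphs

variable {E F : Type*} [NormedAddCommGroup E] [InnerProductSpace ℂ E]
  [NormedAddCommGroup F] [InnerProductSpace ℂ F]
  {G Gi : E →ₗ.[ℂ] F} {D Di : F →ₗ.[ℂ] E}

theorem pairing_eq_zero_of_mem_Gi
    (hGi : ∀ u w, (u, w) ∈ Gi.graph ↔ ∀ q s, (q, s) ∈ D.graph → ⟪w, q⟫ = -⟪u, s⟫)
    {v : E} {t q : F} {s : E} (hv : (v, t) ∈ Gi.graph) (hq : (q, s) ∈ D.graph) :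
    ⟪v, s⟫ + ⟪t, q⟫ = 0 := by
  rw [(hGi v t).1 hv q s hq, add_neg_cancel]

theorem pairing_eq_zero_of_mem_Di
    (hDi : ∀ q w, (q, w) ∈ Di.graph ↔ ∀ u p, (u, p) ∈ G.graph → ⟪w, u⟫ = -⟪q, p⟫)
    {v : E} {t q : F} {s : E} (hv : (v, t) ∈ G.graph) (hq : (q, s) ∈ Di.graph) :
    ⟪v, s⟫ + ⟪t, q⟫ = 0 := by
  rw [← inner_conj_symm v, (hDi q s).1 hq v t hv, ← inner_conj_symm t, map_neg, neg_add_cancel]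

theorem isClosed_graph_of_forall_mem_graph_iff
    (hGi : ∀ u w, (u, w) ∈ Gi.graph ↔ ∀ q s, (q, s) ∈ D.graph → ⟪w, q⟫ = -⟪u, s⟫) :
    IsClosed (Gi.graph : Set (E × F)) := by
  have hset : (Gi.graph : Set (E × F)) =
      ⋂ qs ∈ (D.graph : Set (F × E)), {z : E × F | ⟪z.2, qs.1⟫ = -⟪z.1, qs.2⟫} := by
    ext z
    simp only [SetLike.mem_coe, Set.mem_iInter, Set.mem_ofPred_eq, Prod.forall]
    exact hGi z.1 z.2
  rw [hset]
  exact isClosed_biInter fun qs _ =>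
    isClosed_eq (continuous_snd.inner continuous_const) (continuous_fst.inner continuous_const).neg

variable [CompleteSpace E] [CompleteSpace F]

theorem mem_graph_swap_of_memBD
    (hDi : ∀ q w, (q, w) ∈ Di.graph ↔ ∀ u p, (u, p) ∈ G.graph → ⟪w, u⟫ = -⟪q, p⟫)
    (hG : IsClosed (G.graph : Set (E × F))) {q : F} {s : E}
    (hq : memBD D Di q) (hqs : (q, s) ∈ D.graph) : (s, q) ∈ G.graph := by
  obtain ⟨s', hqs', horth⟩ := hq
  obtain rfl : s' = s := D.mem_graph_snd_inj hqs' hqs rfl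
  refine mem_of_forall_inner_eq_zero G.graph hG fun w hw => ?_
  have hwDi : (w.2, w.1) ∈ Di.graph :=
    (hDi _ _).2 fun u p hup => eq_neg_of_add_eq_zero_left (hw (u, p) hup)
  linear_combination horth w.2 w.1 hwDi

theorem exists_memBD_sub_mem_graph (hGi : IsClosed (Gi.graph : Set (E × F)))
    (hGiG : Gi.graph ≤ G.graph) {v : E} {t : F} (hv : (v, t) ∈ G.graph) :
    ∃ v₀ t₀, (v₀, t₀) ∈ G.graph ∧ memBD G Gi v₀ ∧ (v - v₀, t - t₀) ∈ Gi.graph := by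
  obtain ⟨y, hy, horth⟩ := exists_mem_forall_inner_sub_eq_zero Gi.graph hGi (v, t)
  have hv₀ : (v - y.1, t - y.2) ∈ G.graph := sub_mem hv (hGiG hy)
  refine ⟨v - y.1, t - y.2, hv₀, ⟨t - y.2, hv₀, fun v' t' h => ?_⟩, by simpa using hy⟩
  rw [← inner_conj_symm v', ← inner_conj_symm t', ← map_add, horth (v', t') h, map_zero]

end Graphs

section FormOperator

variable {E F : Type*} [NormedAddCommGroup E] [InnerProductSpace ℂ E]
  [NormedAddCommGroup F] [InnerProductSpace ℂ F]

/-- `u ↦ (T₁ u, T₁G u)` is the operator `T ∈ L(dom G)` representing the form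
`(a G u, G v) + (m u, v)` in the graph inner product, written through its two components
`T u` and `G (T u)`. -/
structure RepresentsForm (G : E →ₗ.[ℂ] F) (a : F →L[ℂ] F) (m : E →L[ℂ] E)
    (T₁ : E → E) (T₁G : E → F) : Prop where
  mem_graph : ∀ u w, (u, w) ∈ G.graph → (T₁ u, T₁G u) ∈ G.graph
  inner_eq : ∀ u w v s, (u, w) ∈ G.graph → (v, s) ∈ G.graph →
    ⟪s, a w⟫ + ⟪v, m u⟫ = ⟪v, T₁ u⟫ + ⟪s, T₁G u⟫

namespace RepresentsForm

variable {G : E →ₗ.[ℂ] F} {a : F →L[ℂ] F} {m : E →L[ℂ] E} {T₁ : E → E} {T₁G : E → F}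

theorem eq_of_forall_inner_eq (hT : RepresentsForm G a m T₁ T₁G) {u x : E} {w y : F}
    (hu : (u, w) ∈ G.graph) (hx : (x, y) ∈ G.graph)
    (h : ∀ v s, (v, s) ∈ G.graph → ⟪v, x⟫ + ⟪s, y⟫ = ⟪s, a w⟫ + ⟪v, m u⟫) :
    (T₁ u, T₁G u) = (x, y) := by
  have hd : (T₁ u - x, T₁G u - y) ∈ G.graph := sub_mem (hT.mem_graph u w hu) hx
  rw [← sub_eq_zero]
  apply prod_eq_zero_of_inner_self_add_inner_self
  have h₁ := hT.inner_eq u w _ _ hu hd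
  have h₂ := h _ _ hd
  simp only [Prod.fst_sub, Prod.snd_sub, inner_sub_right] at h₁ h₂ ⊢
  linear_combination -h₁ - h₂

theorem map_add (hT : RepresentsForm G a m T₁ T₁G) {u u' : E} {w w' : F}
    (hu : (u, w) ∈ G.graph) (hu' : (u', w') ∈ G.graph) :
    (T₁ (u + u'), T₁G (u + u')) = (T₁ u + T₁ u', T₁G u + T₁G u') := by
  refine hT.eq_of_forall_inner_eq (add_mem hu hu')
    (add_mem (hT.mem_graph u w hu) (hT.mem_graph u' w' hu')) fun v s hv => ?_
  have h := hT.inner_eq u w v s hu hv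
  have h' := hT.inner_eq u' w' v s hu' hv
  simp only [inner_add_right, _root_.map_add]
  linear_combination -h - h'

theorem map_smul (hT : RepresentsForm G a m T₁ T₁G) (c : ℂ) {u : E} {w : F}
    (hu : (u, w) ∈ G.graph) :
    (T₁ (c • u), T₁G (c • u)) = (c • T₁ u, c • T₁G u) := by
  refine hT.eq_of_forall_inner_eq (G.graph.smul_mem c hu)
    (G.graph.smul_mem c (hT.mem_graph u w hu)) fun v s hv => ?_
  have h := hT.inner_eq u w v s hu hv
  simp only [inner_smul_right, _root_.map_smul]
  linear_combination -c * h

def range (hT : RepresentsForm G a m T₁ T₁G) : Submodule ℂ (E × F) where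
  carrier := {z | ∃ u w, (u, w) ∈ G.graph ∧ z = (T₁ u, T₁G u)}
  add_mem' := by
    rintro _ _ ⟨u, w, hu, rfl⟩ ⟨u', w', hu', rfl⟩
    exact ⟨u + u', w + w', add_mem hu hu', (hT.map_add hu hu').symm⟩
  zero_mem' := by
    refine ⟨0, 0, zero_mem _, ?_⟩
    have h := hT.map_smul 0 (zero_mem G.graph : ((0 : E), (0 : F)) ∈ G.graph)
    rw [zero_smul, zero_smul, zero_smul] at h
    exact h.symm
  smul_mem' := by
    rintro c _ ⟨u, w, hu, rfl⟩
    exact ⟨c • u, c • w, G.graph.smul_mem c hu, (hT.map_smul c hu).symm⟩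

theorem range_le_graph (hT : RepresentsForm G a m T₁ T₁G) : hT.range ≤ G.graph := by
  rintro _ ⟨u, w, hu, rfl⟩
  exact hT.mem_graph u w hu

variable {Di : F →ₗ.[ℂ] E}

theorem sub_mem_graph
    (hDi : ∀ q w, (q, w) ∈ Di.graph ↔ ∀ u p, (u, p) ∈ G.graph → ⟪w, u⟫ = -⟪q, p⟫)
    (hT : RepresentsForm G a m T₁ T₁G) {u : E} {w : F} (hu : (u, w) ∈ G.graph) :
    (a w - T₁G u, m u - T₁ u) ∈ Di.graph := by
  refine (hDi _ _).2 fun v t hv => ?_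
  have h := congrArg (starRingEnd ℂ) (hT.inner_eq u w v t hu hv)
  simp only [_root_.map_add, inner_conj_symm] at h
  simp only [inner_sub_left]
  linear_combination h

variable [CompleteSpace E] [CompleteSpace F]

theorem adjoint_mem_graph_of_orthogonal
    (hDi : ∀ q w, (q, w) ∈ Di.graph ↔ ∀ u p, (u, p) ∈ G.graph → ⟪w, u⟫ = -⟪q, p⟫)
    (hT : RepresentsForm G a m T₁ T₁G) {v : E} {t : F} (hv : (v, t) ∈ G.graph)
    (horth : ∀ z ∈ hT.range, ⟪v, z.1⟫ + ⟪t, z.2⟫ = 0) :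
    (ContinuousLinearMap.adjoint a t, ContinuousLinearMap.adjoint m v) ∈ Di.graph := by
  refine (hDi _ _).2 fun u p hu => ?_
  rw [ContinuousLinearMap.adjoint_inner_left, ContinuousLinearMap.adjoint_inner_left]
  linear_combination hT.inner_eq u p v t hu hv + horth _ ⟨u, p, hu, rfl⟩

end RepresentsForm

end FormOperator

section DirichletToNeumann

variable {E F : Type*} [NormedAddCommGroup E] [InnerProductSpace ℂ E] [CompleteSpace E]
  [NormedAddCommGroup F] [InnerProductSpace ℂ F] [CompleteSpace F]
  {G Gi : E →ₗ.[ℂ] F} {D Di : F →ₗ.[ℂ] E} {a : F →L[ℂ] F} {m : E →L[ℂ] E}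

def AnnihilatesAdjointKernel (G Gi : E →ₗ.[ℂ] F) (Di : F →ₗ.[ℂ] E) (a : F →L[ℂ] F)
    (m : E →L[ℂ] E) (s : E) (q₀ : F) : Prop :=
  ∀ v t, (v, t) ∈ G.graph →
    (ContinuousLinearMap.adjoint a t, ContinuousLinearMap.adjoint m v) ∈ Di.graph →
    ∀ v₀ t₀, memBD G Gi v₀ → v - v₀ ∈ Gi.domain → (v₀, t₀) ∈ G.graph →
      ⟪v₀, s⟫ + ⟪t₀, q₀⟫ = 0

theorem pairing_eq_zero_of_mem_dtnGraph
    (hGi : ∀ u w, (u, w) ∈ Gi.graph ↔ ∀ q s, (q, s) ∈ D.graph → ⟪w, q⟫ = -⟪u, s⟫)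
    (hDi : ∀ q w, (q, w) ∈ Di.graph ↔ ∀ u p, (u, p) ∈ G.graph → ⟪w, u⟫ = -⟪q, p⟫)
    (hGiG : Gi.graph ≤ G.graph) (hDiD : Di.graph ≤ D.graph)
    {u₀ : E} {q₀ : F} (hz : (u₀, q₀) ∈ dtnGraph G Gi D Di a m)
    {v : E} {t : F} (hv : (v, t) ∈ G.graph)
    (hker : (ContinuousLinearMap.adjoint a t, ContinuousLinearMap.adjoint m v) ∈ Di.graph)
    {v₀ : E} {t₀ : F} (hv₀ : (v₀, t₀) ∈ G.graph) (hvv₀ : v - v₀ ∈ Gi.domain)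
    {s : E} (hq₀ : (q₀, s) ∈ D.graph) :
    ⟪v₀, s⟫ + ⟪t₀, q₀⟫ = 0 := by
  obtain ⟨u, p, hu, hup, -, -, -, hpq₀⟩ := hz
  obtain ⟨t', hvv₀'⟩ := LinearPMap.mem_domain_iff.1 hvv₀
  obtain rfl : t' = t - t₀ := G.mem_graph_snd_inj (hGiG hvv₀') (sub_mem hv hv₀) rfl
  obtain ⟨s', hpq₀'⟩ := LinearPMap.mem_domain_iff.1 hpq₀
  obtain rfl : s' = m u - s := D.mem_graph_snd_inj (hDiD hpq₀') (sub_mem hup hq₀) rfl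
  have hGreen₁ := pairing_eq_zero_of_mem_Gi hGi hvv₀' hq₀
  have hGreen₂ := pairing_eq_zero_of_mem_Di hDi hv hpq₀'
  have hker' := (hDi _ _).1 hker u p hu
  rw [ContinuousLinearMap.adjoint_inner_left, ContinuousLinearMap.adjoint_inner_left] at hker'
  simp only [inner_sub_left, inner_sub_right] at hGreen₁ hGreen₂
  calc ⟪v₀, s⟫ + ⟪t₀, q₀⟫ = ⟪v, s⟫ + ⟪t, q₀⟫ := by linear_combination -hGreen₁
    _ = ⟪v, m u⟫ + ⟪t, a p⟫ := by linear_combination -hGreen₂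
    _ = 0 := by linear_combination hker'

theorem RepresentsForm.mem_range
    (hGi : ∀ u w, (u, w) ∈ Gi.graph ↔ ∀ q s, (q, s) ∈ D.graph → ⟪w, q⟫ = -⟪u, s⟫)
    (hDi : ∀ q w, (q, w) ∈ Di.graph ↔ ∀ u p, (u, p) ∈ G.graph → ⟪w, u⟫ = -⟪q, p⟫)
    (hG : IsClosed (G.graph : Set (E × F))) (hGiG : Gi.graph ≤ G.graph)
    {T₁ : E → E} {T₁G : E → F} (hT : RepresentsForm G a m T₁ T₁G)
    (hR : IsClosed (hT.range : Set (E × F))) {q₀ : F} {s : E}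
    (hq₀ : (q₀, s) ∈ D.graph) (hs : (s, q₀) ∈ G.graph)
    (hcond : AnnihilatesAdjointKernel G Gi Di a m s q₀) :
    (s, q₀) ∈ hT.range := by
  refine mem_of_forall_inner_eq_zero hT.range hR fun w hw => ?_
  obtain ⟨y, hy, hwy⟩ := exists_mem_forall_inner_sub_eq_zero G.graph hG w
  have hyR : ∀ z ∈ hT.range, ⟪y.1, z.1⟫ + ⟪y.2, z.2⟫ = 0 := fun z hz => by
    have := hwy z (hT.range_le_graph hz)
    simp only [inner_sub_left] at this
    linear_combination hw z hz - this
  have hker := hT.adjoint_mem_graph_of_orthogonal hDi hy hyR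
  obtain ⟨v₀, t₀, hv₀, hv₀BD, hyv₀⟩ :=
    exists_memBD_sub_mem_graph (isClosed_graph_of_forall_mem_graph_iff hGi) hGiG hy
  have hw_y := hwy (s, q₀) hs
  have hGreen := pairing_eq_zero_of_mem_Gi hGi hyv₀ hq₀
  simp only [inner_sub_left] at hw_y hGreen
  calc ⟪w.1, s⟫ + ⟪w.2, q₀⟫ = ⟪y.1, s⟫ + ⟪y.2, q₀⟫ := by linear_combination hw_y
    _ = ⟪v₀, s⟫ + ⟪t₀, q₀⟫ := by linear_combination hGreen
    _ = 0 := hcond y.1 y.2 hy hker v₀ t₀ hv₀BD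
        (by simpa using LinearPMap.mem_domain_of_mem_graph hyv₀) hv₀

theorem exists_mem_dtnGraph
    (hGi : ∀ u w, (u, w) ∈ Gi.graph ↔ ∀ q s, (q, s) ∈ D.graph → ⟪w, q⟫ = -⟪u, s⟫)
    (hDi : ∀ q w, (q, w) ∈ Di.graph ↔ ∀ u p, (u, p) ∈ G.graph → ⟪w, u⟫ = -⟪q, p⟫)
    (hG : IsClosed (G.graph : Set (E × F))) (hGiG : Gi.graph ≤ G.graph)
    (hDiD : Di.graph ≤ D.graph)
    {T₁ : E → E} {T₁G : E → F} (hT : RepresentsForm G a m T₁ T₁G)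
    (hR : IsClosed (hT.range : Set (E × F))) {q₀ : F} {s : E}
    (hq₀BD : memBD D Di q₀) (hq₀ : (q₀, s) ∈ D.graph)
    (hcond : AnnihilatesAdjointKernel G Gi Di a m s q₀) :
    ∃ u₀, (u₀, q₀) ∈ dtnGraph G Gi D Di a m := by
  have hs := mem_graph_swap_of_memBD hDi hG hq₀BD hq₀
  obtain ⟨u, w, hu, hTu⟩ := hT.mem_range hGi hDi hG hGiG hR hq₀ hs hcond
  obtain ⟨rfl, rfl⟩ := Prod.mk.inj hTu
  have hsol := hT.sub_mem_graph hDi hu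
  obtain ⟨u₀, _, -, hu₀BD, huu₀⟩ :=
    exists_memBD_sub_mem_graph (isClosed_graph_of_forall_mem_graph_iff hGi) hGiG hu
  refine ⟨u₀, u, w, hu, ?_, hu₀BD, LinearPMap.mem_domain_of_mem_graph huu₀, hq₀BD,
    LinearPMap.mem_domain_of_mem_graph hsol⟩
  simpa using add_mem (hDiD hsol) hq₀

end DirichletToNeumann

theorem statement18_general
    (G Gi : H₀ →ₗ.[ℂ] H₁) (D Di : H₁ →ₗ.[ℂ] H₀)
    (hGclosed : IsClosed (G.graph : Set (H₀ × H₁)))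
    (hGi : ∀ u w, (u, w) ∈ Gi.graph ↔ ∀ q s, (q, s) ∈ D.graph → ⟪w, q⟫ = -⟪u, s⟫)
    (hDi : ∀ q w, (q, w) ∈ Di.graph ↔ ∀ u p, (u, p) ∈ G.graph → ⟪w, u⟫ = -⟪q, p⟫)
    (hGiG : Gi.graph ≤ G.graph) (hDiD : Di.graph ≤ D.graph)
    (a : H₁ →L[ℂ] H₁) (m : H₀ →L[ℂ] H₀)
    (T1 : H₀ → H₀) (T1G : H₀ → H₁)
    (hT1mem : ∀ u w, (u, w) ∈ G.graph → (T1 u, T1G u) ∈ G.graph)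
    (hT1form : ∀ u w v s, (u, w) ∈ G.graph → (v, s) ∈ G.graph →
      ⟪s, a w⟫ + ⟪v, m u⟫ = ⟪v, T1 u⟫ + ⟪s, T1G u⟫)
    (hT1ran : IsClosed
      {z : H₀ × H₁ | ∃ u w, (u, w) ∈ G.graph ∧ z = (T1 u, T1G u)}) :
    ∀ q₀ : H₁,
      (∃ u₀, (u₀, q₀) ∈ dtnGraph G Gi D Di a m) ↔
      (memBD D Di q₀ ∧
        ∀ v t, (v, t) ∈ G.graph →
          ((ContinuousLinearMap.adjoint a) t,
            (ContinuousLinearMap.adjoint m) v) ∈ Di.graph →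
          ∀ v₀ t₀ s gs, memBD G Gi v₀ → v - v₀ ∈ Gi.domain →
            (v₀, t₀) ∈ G.graph → (q₀, s) ∈ D.graph → (s, gs) ∈ G.graph →
            ⟪v₀, s⟫ + ⟪t₀, gs⟫ = 0) := by
  intro q₀
  constructor
  · rintro ⟨u₀, hz⟩
    obtain ⟨-, -, -, -, -, -, hq₀BD, -⟩ := id hz
    refine ⟨hq₀BD, fun v t hv hker v₀ t₀ s gs _ hvv₀ hv₀ hq₀ hs => ?_⟩
    obtain rfl : gs = q₀ :=
      G.mem_graph_snd_inj hs (mem_graph_swap_of_memBD hDi hGclosed hq₀BD hq₀) rfl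
    exact pairing_eq_zero_of_mem_dtnGraph hGi hDi hGiG hDiD hz hv hker hv₀ hvv₀ hq₀
  · rintro ⟨hq₀BD, hcond⟩
    obtain ⟨s, hq₀, -⟩ := id hq₀BD
    have hs := mem_graph_swap_of_memBD hDi hGclosed hq₀BD hq₀
    exact exists_mem_dtnGraph hGi hDi hGclosed hGiG hDiD ⟨hT1mem, hT1form⟩ hT1ran hq₀BD hq₀
      fun v t hv hker v₀ t₀ hv₀BD hvv₀ hv₀ => hcond v t hv hker v₀ t₀ s q₀ hv₀BD hvv₀ hv₀ hq₀ hs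

/-- Proposition 5.7: if `ran T` is closed in `dom G`, then the domain of the
inverse Dirichlet-to-Neumann graph `Λ⁻¹` equals the set of `q₀ ∈ BD(D)` such
that `(D q₀, π_{BD(G)} v)_{BD(G)} = 0` for all `v ∈ ker (m* - D̊ a* G)`. -/
theorem statement18
    (G Gi : H₀ →ₗ.[ℂ] H₁) (D Di : H₁ →ₗ.[ℂ] H₀)
    (hGdense : Dense (G.domain : Set H₀)) (hDdense : Dense (D.domain : Set H₁))
    (hGclosed : IsClosed (G.graph : Set (H₀ × H₁)))
    (hDclosed : IsClosed (D.graph : Set (H₁ × H₀)))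
    (hGi : ∀ u w, (u, w) ∈ Gi.graph ↔ ∀ q s, (q, s) ∈ D.graph → ⟪w, q⟫ = -⟪u, s⟫)
    (hDi : ∀ q w, (q, w) ∈ Di.graph ↔ ∀ u p, (u, p) ∈ G.graph → ⟪w, u⟫ = -⟪q, p⟫)
    (hGiG : Gi.graph ≤ G.graph) (hDiD : Di.graph ≤ D.graph)
    (a : H₁ →L[ℂ] H₁) (m : H₀ →L[ℂ] H₀) (ha : Coercive a)
    (T1 : H₀ → H₀) (T1G : H₀ → H₁)
    (hT1mem : ∀ u w, (u, w) ∈ G.graph → (T1 u, T1G u) ∈ G.graph)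
    (hT1form : ∀ u w v s, (u, w) ∈ G.graph → (v, s) ∈ G.graph →
      ⟪s, a w⟫ + ⟪v, m u⟫ = ⟪v, T1 u⟫ + ⟪s, T1G u⟫)
    (hT1ran : IsClosed
      {z : H₀ × H₁ | ∃ u w, (u, w) ∈ G.graph ∧ z = (T1 u, T1G u)}) :
    ∀ q₀ : H₁,
      (∃ u₀, (u₀, q₀) ∈ dtnGraph G Gi D Di a m) ↔
      (memBD D Di q₀ ∧
        ∀ v t, (v, t) ∈ G.graph →
          ((ContinuousLinearMap.adjoint a) t,
            (ContinuousLinearMap.adjoint m) v) ∈ Di.graph →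
          ∀ v₀ t₀ s gs, memBD G Gi v₀ → v - v₀ ∈ Gi.domain →
            (v₀, t₀) ∈ G.graph → (q₀, s) ∈ D.graph → (s, gs) ∈ G.graph →
            ⟪v₀, s⟫ + ⟪t₀, gs⟫ = 0) :=
  statement18_general G Gi D Di hGclosed hGi hDi hGiG hDiD a m T1 T1G hT1mem hT1form hT1ran

end DtNPaper
end
end
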